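/- arXiv:1109.5061 — 7 statements merged into one kernel-verified Lean document; each statement's English description precedes it below -/
import Mathlib

section
/- Let x = (x_0, w) be a possibly maximal μ-admissible pair, let σ be its associated permutation of {1,…,g}, let F = {i ∈ {1,…,g} : w(i) = i} and d = #F. Then, as an identity of integers, ℓ(x) = g(g+1)/2 + d − #{i ∈ {1,…,g} : σ(i) = i} − ℓ(σ) + 2·( A_σ + A_{σ⁻¹} + #{(i,f) ∈ {1,…,g} × F : i < f < σ(i)} ). -/
/-- A μ-admissible pair for `GSp_{2g}`: a permutation `w` of `{1,…,2g}`
(encoded as a permutation of `ℕ` fixing everything outside `[1, 2g]`)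
satisfying `w(2g+1−i) = 2g+1−w(i)`, together with a vector
`x_0 ∈ {0,1}^{2g}` (encoded as a function `ℕ → ℤ`, zero outside `[1, 2g]`)
with `x_0(i) + x_0(2g+1−i) = 1`, `x_0(i) = 0` when `w⁻¹(i) > i`
and `x_0(i) = 1` when `w⁻¹(i) < i`. -/
structure AdmPair (g : ℕ) where
  w : Equiv.Perm ℕ
  x0 : ℕ → ℤ
  w_fix : ∀ i : ℕ, i ∉ Finset.Icc 1 (2*g) → w i = i
  w_symm : ∀ i ∈ Finset.Icc 1 (2*g), w (2*g+1-i) = 2*g+1 - w i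
  x0_mem : ∀ i ∈ Finset.Icc 1 (2*g), x0 i = 0 ∨ x0 i = 1
  x0_out : ∀ i : ℕ, i ∉ Finset.Icc 1 (2*g) → x0 i = 0
  x0_sum : ∀ i ∈ Finset.Icc 1 (2*g), x0 i + x0 (2*g+1-i) = 1
  x0_gt : ∀ i ∈ Finset.Icc 1 (2*g), i < w.symm i → x0 i = 0
  x0_lt : ∀ i ∈ Finset.Icc 1 (2*g), w.symm i < i → x0 i = 1

namespace AdmPair

variable {g : ℕ}

/-- The length of a μ-admissible pair, by the Iwahori–Matsumoto formula. -/
def len (x : AdmPair g) : ℤ :=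
  (∑ i ∈ Finset.Icc 1 g, ∑ j ∈ Finset.Icc 1 g,
      if i < j then
        (if x.w.symm i < x.w.symm j then |x.x0 i - x.x0 j|
         else |x.x0 i - x.x0 j + 1|)
      else 0)
  + (∑ i ∈ Finset.Icc 1 g, ∑ j ∈ Finset.Icc 1 g,
      if i < j then
        (if x.w.symm i < x.w.symm (2*g+1-j) then |x.x0 i + x.x0 j - 1|
         else |x.x0 i + x.x0 j|)
      else 0)
  + (∑ i ∈ Finset.Icc 1 g,
      if x.w.symm i < x.w.symm (2*g+1-i) then |2 * x.x0 i - 1|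
      else |2 * x.x0 i|)

/-- The p-rank of a μ-admissible pair: the number of fixed points of `w`
in `{1,…,g}`. -/
def prank (x : AdmPair g) : ℕ :=
  ((Finset.Icc 1 g).filter (fun i => x.w i = i)).card

/-- `x` is possibly maximal if `w(i) = 2g+1−i` whenever `i ∈ {1,…,g}` and
`w(i) > g`. -/
def PossiblyMaximal (x : AdmPair g) : Prop :=
  ∀ i ∈ Finset.Icc 1 g, g < x.w i → x.w i = 2*g+1-i

end AdmPair

/-- `IsAssocPerm g x σ` : `σ` is the associated permutation of `{1,…,g}`
of the μ-admissible pair `x`, encoded as a permutation of `ℕ` fixing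
everything outside `[1, g]` and given on `[1, g]` by
`σ(i) = w(i)` if `w(i) ≤ g` and `σ(i) = 2g+1−w(i)` otherwise. -/
def IsAssocPerm (g : ℕ) (x : AdmPair g) (σ : Equiv.Perm ℕ) : Prop :=
  (∀ i : ℕ, i ∉ Finset.Icc 1 g → σ i = i) ∧
  (∀ i ∈ Finset.Icc 1 g, σ i = if x.w i ≤ g then x.w i else 2*g+1 - x.w i)

/-- `A_σ = #{(i,j) ∈ {1,…,g}² : i < j < σ(j) < σ(i)}`. -/
def permA (g : ℕ) (σ : Equiv.Perm ℕ) : ℕ :=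
  (((Finset.Icc 1 g) ×ˢ (Finset.Icc 1 g)).filter
    (fun p => p.1 < p.2 ∧ p.2 < σ p.2 ∧ σ p.2 < σ p.1)).card

/-- `B_σ = #{(i,j) ∈ {1,…,g}² : i < j = σ(j) < σ(i)}`. -/
def permB (g : ℕ) (σ : Equiv.Perm ℕ) : ℕ :=
  (((Finset.Icc 1 g) ×ˢ (Finset.Icc 1 g)).filter
    (fun p => p.1 < p.2 ∧ σ p.2 = p.2 ∧ p.2 < σ p.1)).card

/-- `C_σ = #{(i,j) ∈ {1,…,g}² : i < j < σ(i) < σ(j)}`. -/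
def permC (g : ℕ) (σ : Equiv.Perm ℕ) : ℕ :=
  (((Finset.Icc 1 g) ×ˢ (Finset.Icc 1 g)).filter
    (fun p => p.1 < p.2 ∧ p.2 < σ p.1 ∧ σ p.1 < σ p.2)).card

/-- The number of inversions of `σ` on `{1,…,g}` (its Coxeter length). -/
def permLen (g : ℕ) (σ : Equiv.Perm ℕ) : ℕ :=
  (((Finset.Icc 1 g) ×ˢ (Finset.Icc 1 g)).filter
    (fun p => p.1 < p.2 ∧ σ p.2 < σ p.1)).card

/-- The number of fixed points of `σ` in `{1,…,g}`. -/
def permFix (g : ℕ) (σ : Equiv.Perm ℕ) : ℕ :=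
  ((Finset.Icc 1 g).filter (fun i => σ i = i)).card

/-!
Because `x` is possibly maximal, every `i ≤ g` is either sent by `w⁻¹` into `{1,…,g}`,
where `σ⁻¹ i = w⁻¹ i`, or to its mirror `2g+1-i`, in which case `σ i = i` and `x₀(i) = 0`.
This makes the Iwahori–Matsumoto summands explicit: `δ³_i = 1 - [σ i = i] + [w i = i]` and,
for `i < j`, `δ¹_ij + δ²_ij = 1 - [σ⁻¹ j < σ⁻¹ i] + 2 [I_ij]`, where `I_ij` says that neither
index is mirrored, `σ⁻¹ j < σ⁻¹ i` and `(x₀ i, x₀ j) ≠ (0, 1)`. The sign conditions on `x₀`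
split `I_ij` into the patterns of `A_σ` (after the substitution `(i, j) ↦ (σ⁻¹ j, σ⁻¹ i)`),
of `A_{σ⁻¹}`, and arcs of `σ⁻¹` passing over a fixed point `f` of `w`, on the side of `f`
chosen by `x₀(f)`. A permutation has as many arcs passing over a fixed point from left to
right as from right to left, so the latter give the crossing term.
-/

open Finset

namespace Finset

variable {α β : Type*}

theorem card_filter_product_eq_sum_left (s : Finset α) (t : Finset β) (P : α × β → Prop)
    [DecidablePred P] : #{p ∈ s ×ˢ t | P p} = ∑ a ∈ s, #{b ∈ t | P (a, b)} := by
  simp only [card_filter, sum_product]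

theorem card_filter_product_eq_sum_right (s : Finset α) (t : Finset β) (P : α × β → Prop)
    [DecidablePred P] : #{p ∈ s ×ˢ t | P p} = ∑ b ∈ t, #{a ∈ s | P (a, b)} := by
  simp only [card_filter, sum_product_right]

theorem card_lt_pairs_Icc_add (g : ℕ) :
    (#{p ∈ Icc 1 g ×ˢ Icc 1 g | p.1 < p.2} : ℤ) + g = (g : ℤ) * (g + 1) / 2 := by
  have h := Nat.choose_two_right (g + 1)
  rw [Nat.choose_succ_succ', Nat.choose_one_right, Nat.add_sub_cancel, add_comm] at h
  rw [card_product_filter_lt, Nat.card_Icc, Nat.add_sub_cancel, mul_comm]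
  exact_mod_cast h

end Finset

namespace Equiv.Perm

variable {α : Type*} {σ : Perm α} {s : Finset α}

theorem setOf_symm_apply_ne_subset (hs : {a | σ a ≠ a} ⊆ s) : {a | σ.symm a ≠ a} ⊆ s :=
  fun _ ha => hs fun h => ha (σ.symm_apply_eq.mpr h.symm)

theorem apply_mem_iff (hs : {a | σ a ≠ a} ⊆ s) {a : α} : σ a ∈ s ↔ a ∈ s := by
  simpa [Finset.map_perm hs] using Finset.mem_map' σ.toEmbedding (s := s) (a := a)

theorem card_filter_comp (hs : {a | σ a ≠ a} ⊆ s) (p : α → Prop) [DecidablePred p] :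
    #{a ∈ s | p (σ a)} = #{a ∈ s | p a} := by
  simpa only [card_filter] using σ.sum_comp s (fun a => if p a then 1 else 0) hs

theorem card_filter_and_not_apply_eq (hs : {a | σ a ≠ a} ⊆ s) (p : α → Prop) [DecidablePred p] :
    #{a ∈ s | p a ∧ ¬p (σ a)} = #{a ∈ s | ¬p a ∧ p (σ a)} := by
  have hp := card_filter_add_card_filter_not (s := {a ∈ s | p a}) fun a => p (σ a)
  have hpσ := card_filter_add_card_filter_not (s := {a ∈ s | p (σ a)}) p
  simp only [filter_filter] at hp hpσ
  rw [card_filter_comp hs, filter_congr fun _ _ => and_comm,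
    filter_congr fun _ _ => and_comm (b := ¬p _)] at hpσ
  omega

theorem card_filter_product_comp_swap [DecidableEq α] (hs : {a | σ a ≠ a} ⊆ s)
    (P : α × α → Prop) [DecidablePred P] :
    #{p ∈ s ×ˢ s | P (σ p.2, σ p.1)} = #{p ∈ s ×ˢ s | P p} := by
  refine card_nbij' (fun p => (σ p.2, σ p.1)) (fun p => (σ.symm p.2, σ.symm p.1)) ?_ ?_ ?_ ?_
  · intro p hp
    simp_all [apply_mem_iff hs]
  · intro p hp
    simp_all [apply_mem_iff (setOf_symm_apply_ne_subset hs)]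
  · intro p _
    simp
  · intro p _
    simp

variable [LinearOrder α]

theorem card_filter_lt_lt_apply (hs : {a | σ a ≠ a} ⊆ s) {f : α} (hf : σ f = f) :
    #{a ∈ s | a < f ∧ f < σ a} = #{a ∈ s | f < a ∧ σ a < f} := by
  have hne : ∀ a, a ≠ f → σ a ≠ f := fun a ha h => ha (σ.injective (h.trans hf.symm))
  convert card_filter_and_not_apply_eq hs (· < f) using 2
  · refine filter_congr fun a _ => and_congr_right fun ha => ?_
    rw [not_lt, le_iff_lt_or_eq, or_iff_left (hne a ha.ne).symm]
  · refine filter_congr fun a _ => and_congr_left fun ha => ?_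
    rw [not_lt, le_iff_lt_or_eq, or_iff_left]
    rintro rfl
    exact (hf ▸ ha).false

theorem card_filter_lt_symm_apply_lt (hs : {a | σ a ≠ a} ⊆ s) (f : α) :
    #{a ∈ s | f < a ∧ σ.symm a < f} = #{a ∈ s | a < f ∧ f < σ a} := by
  rw [← card_filter_comp hs]
  simp only [symm_apply_apply, and_comm]

theorem card_filter_lt_lt_symm_apply (hs : {a | σ a ≠ a} ⊆ s) {f : α} (hf : σ f = f) :
    #{a ∈ s | a < f ∧ f < σ.symm a} = #{a ∈ s | a < f ∧ f < σ a} := by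
  rw [card_filter_lt_lt_apply (setOf_symm_apply_ne_subset hs) (σ.symm_apply_eq.mpr hf.symm),
    card_filter_lt_symm_apply_lt hs f]

/-- Each `f` with `F f` contributes the arcs of `σ⁻¹` passing over it, counted at their left end
when `q f` holds and at their right end otherwise. -/
theorem card_crossing_fixed_eq [DecidableEq α] (hs : {a | σ a ≠ a} ⊆ s)
    (F q : α → Prop) [DecidablePred F] [DecidablePred q] (hF : ∀ f, F f → σ f = f) :
    #{p ∈ s ×ˢ s | p.1 < p.2 ∧ F p.1 ∧ q p.1 ∧ σ.symm p.2 < p.1}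
      + #{p ∈ s ×ˢ s | p.1 < p.2 ∧ F p.2 ∧ ¬q p.2 ∧ p.2 < σ.symm p.1}
      = #{p ∈ s ×ˢ s.filter F | p.1 < p.2 ∧ p.2 < σ p.1} := by
  rw [card_filter_product_eq_sum_left, card_filter_product_eq_sum_right,
    card_filter_product_eq_sum_right, sum_filter, ← sum_add_distrib]
  refine sum_congr rfl fun f _ => ?_
  by_cases hFf : F f
  · by_cases hqf : q f
    · simp only [hFf, hqf, true_and, not_true_eq_false, false_and, and_false, filter_false,
        card_empty, add_zero, if_true]
      exact card_filter_lt_symm_apply_lt hs f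
    · simp only [hFf, hqf, true_and, false_and, and_false, not_false_eq_true, filter_false,
        card_empty, zero_add, if_true]
      exact card_filter_lt_lt_symm_apply hs (hF f hFf)
  · simp [hFf]

end Equiv.Perm

theorem permLen_symm {g : ℕ} {σ : Equiv.Perm ℕ}
    (hσ : {a | σ a ≠ a} ⊆ (Icc 1 g : Set ℕ)) :
    permLen g σ.symm = permLen g σ := by
  rw [permLen, ← σ.card_filter_product_comp_swap hσ]
  simp only [Equiv.symm_apply_apply]
  exact congrArg card (filter_congr fun _ _ => and_comm)

theorem card_filter_symm_lt_symm_lt_eq_permA {g : ℕ} {σ : Equiv.Perm ℕ}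
    (hσ : {a | σ a ≠ a} ⊆ (Icc 1 g : Set ℕ)) :
    #{p ∈ Icc 1 g ×ˢ Icc 1 g | p.1 < p.2 ∧ σ.symm p.2 < σ.symm p.1 ∧ σ.symm p.1 < p.1}
      = permA g σ := by
  rw [← σ.card_filter_product_comp_swap hσ]
  simp only [Equiv.symm_apply_apply]
  exact congrArg card (filter_congr fun _ _ => by tauto)

namespace IsAssocPerm

variable {g : ℕ} {x : AdmPair g} {σ : Equiv.Perm ℕ}

theorem setOf_apply_ne_subset (hσ : IsAssocPerm g x σ) :
    {a | σ a ≠ a} ⊆ (Icc 1 g : Set ℕ) :=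
  fun a ha => by_contra fun h => ha (hσ.1 a h)

theorem apply_eq_self (hσ : IsAssocPerm g x σ) {f : ℕ} (hf : x.w f = f) : σ f = f := by
  by_cases hfI : f ∈ Icc 1 g
  · rw [hσ.2 f hfI, hf, if_pos (mem_Icc.1 hfI).2]
  · exact hσ.1 f hfI

end IsAssocPerm

namespace AdmPair

variable {g : ℕ} (x : AdmPair g)

/-- `δ¹_ij + δ²_ij` in the Iwahori–Matsumoto formula; `diagDelta` is `δ³_i`. -/
def pairDelta (i j : ℕ) : ℤ :=
  (if x.w.symm i < x.w.symm j then |x.x0 i - x.x0 j| else |x.x0 i - x.x0 j + 1|)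
    + (if x.w.symm i < x.w.symm (2*g+1-j) then |x.x0 i + x.x0 j - 1| else |x.x0 i + x.x0 j|)

def diagDelta (i : ℕ) : ℤ :=
  if x.w.symm i < x.w.symm (2*g+1-i) then |2 * x.x0 i - 1| else |2 * x.x0 i|

theorem len_eq_sum :
    x.len = ∑ p ∈ Icc 1 g ×ˢ Icc 1 g with p.1 < p.2, x.pairDelta p.1 p.2
      + ∑ i ∈ Icc 1 g, x.diagDelta i := by
  rw [sum_filter, sum_product, len, ← sum_add_distrib]
  simp only [← sum_add_distrib, ite_add_ite, add_zero]
  rfl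

variable {x}

theorem symm_mem_Icc {i : ℕ} (hi : i ∈ Icc 1 (2*g)) : x.w.symm i ∈ Icc 1 (2*g) := by
  by_contra h
  have := x.w_fix _ h
  rw [Equiv.apply_symm_apply] at this
  exact h (this ▸ hi)

theorem symm_reflect {i : ℕ} (hi : i ∈ Icc 1 (2*g)) :
    x.w.symm (2*g+1-i) = 2*g+1 - x.w.symm i := by
  rw [Equiv.symm_apply_eq, x.w_symm _ (symm_mem_Icc hi), Equiv.apply_symm_apply]

namespace PossiblyMaximal

variable {σ : Equiv.Perm ℕ}

theorem symm_cases (hx : x.PossiblyMaximal) (hσ : IsAssocPerm g x σ) {i : ℕ}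
    (hi : i ∈ Icc 1 g) :
    (x.w.symm i ≤ g ∧ σ.symm i = x.w.symm i)
      ∨ (x.w.symm i = 2*g+1-i ∧ σ.symm i = i ∧ x.x0 i = 0) := by
  set k := x.w.symm i
  have hwk : x.w k = i := x.w.apply_symm_apply i
  have hkI := symm_mem_Icc (x := x) (Icc_subset_Icc_right (by omega) hi)
  simp only [mem_Icc] at hi hkI
  by_cases hkg : k ≤ g
  · refine .inl ⟨hkg, ?_⟩
    rw [Equiv.symm_apply_eq, hσ.2 k (mem_Icc.2 ⟨hkI.1, hkg⟩), hwk, if_pos hi.2]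
  · have hmirror : x.w (2*g+1-k) = 2*g+1-i := hwk ▸ x.w_symm k (mem_Icc.2 hkI)
    have hki : k = 2*g+1-i := by
      have := hx (2*g+1-k) (mem_Icc.2 ⟨by omega, by omega⟩) (by omega)
      omega
    have hwi : x.w i = 2*g+1-i := by
      rw [← hmirror]; congr 1; omega
    refine .inr ⟨hki, ?_, x.x0_gt i (Icc_subset_Icc_right (by omega) (mem_Icc.2 hi)) (by omega)⟩
    rw [Equiv.symm_apply_eq, hσ.2 i (mem_Icc.2 hi), if_neg (by omega), hwi]
    omega

theorem diagDelta_eq (hx : x.PossiblyMaximal) (hσ : IsAssocPerm g x σ) {i : ℕ}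
    (hi : i ∈ Icc 1 g) :
    x.diagDelta i = 1 - (if σ i = i then 1 else 0) + (if x.w i = i then 1 else 0) := by
  have hi' : i ∈ Icc 1 (2*g) := Icc_subset_Icc_right (by omega) hi
  rw [diagDelta, symm_reflect hi']
  simp only [← σ.symm_apply_eq.trans eq_comm, ← x.w.symm_apply_eq.trans eq_comm]
  have := hx.symm_cases hσ hi
  simp only [mem_Icc] at hi
  rcases x.x0_mem i hi' with h | h <;> rw [h] <;> norm_num <;> split_ifs <;> omega

theorem pairDelta_eq (hx : x.PossiblyMaximal) (hσ : IsAssocPerm g x σ)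
    {i j : ℕ} (hi : i ∈ Icc 1 g) (hj : j ∈ Icc 1 g) (hij : i < j) :
    x.pairDelta i j = 1 - (if σ.symm j < σ.symm i then 1 else 0)
      + 2 * (if x.w.symm i ≤ g ∧ x.w.symm j ≤ g ∧ σ.symm j < σ.symm i
          ∧ ¬(x.x0 i = 0 ∧ x.x0 j = 1) then 1 else 0) := by
  have hi' : i ∈ Icc 1 (2*g) := Icc_subset_Icc_right (by omega) hi
  have hj' : j ∈ Icc 1 (2*g) := Icc_subset_Icc_right (by omega) hj
  have := x.w.symm.injective.ne hij.ne
  have := σ.symm.injective.ne hij.ne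
  have := x.x0_lt i hi'
  have := x.x0_gt i hi'
  have := x.x0_lt j hj'
  have := x.x0_gt j hj'
  have := (mem_Icc.1 (symm_mem_Icc (x := x) hi')).1
  have := (mem_Icc.1 (symm_mem_Icc (x := x) hj')).1
  rw [pairDelta, symm_reflect hj']
  rcases hx.symm_cases hσ hi with ⟨_, hσi⟩ | ⟨_, hσi, _⟩ <;>
  rcases hx.symm_cases hσ hj with ⟨_, hσj⟩ | ⟨_, hσj, _⟩ <;>
  simp only [mem_Icc] at hi hj <;> rw [hσi, hσj] <;>
  rcases x.x0_mem i hi' with h | h <;> rcases x.x0_mem j hj' with h' | h' <;> rw [h, h'] <;>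
    norm_num <;> split_ifs <;> omega

theorem ite_unmirrored_inversion_eq (hx : x.PossiblyMaximal) (hσ : IsAssocPerm g x σ)
    {i j : ℕ} (hi : i ∈ Icc 1 g) (hj : j ∈ Icc 1 g) (hij : i < j) :
    (if x.w.symm i ≤ g ∧ x.w.symm j ≤ g ∧ σ.symm j < σ.symm i
        ∧ ¬(x.x0 i = 0 ∧ x.x0 j = 1) then 1 else 0 : ℤ)
      = (if σ.symm j < σ.symm i ∧ σ.symm i < i then 1 else 0)
        + (if j < σ.symm j ∧ σ.symm j < σ.symm i then 1 else 0)
        + (if x.w i = i ∧ x.x0 i = 1 ∧ σ.symm j < i then 1 else 0)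
        + (if x.w j = j ∧ ¬x.x0 j = 1 ∧ j < σ.symm i then 1 else 0) := by
  have hi' : i ∈ Icc 1 (2*g) := Icc_subset_Icc_right (by omega) hi
  have hj' : j ∈ Icc 1 (2*g) := Icc_subset_Icc_right (by omega) hj
  simp only [← x.w.symm_apply_eq.trans eq_comm]
  have := x.x0_lt i hi'
  have := x.x0_gt i hi'
  have := x.x0_lt j hj'
  have := x.x0_gt j hj'
  have := x.x0_mem i hi'
  have := x.x0_mem j hj'
  rcases hx.symm_cases hσ hi with ⟨_, hσi⟩ | ⟨_, hσi, _⟩ <;>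
  rcases hx.symm_cases hσ hj with ⟨_, hσj⟩ | ⟨_, hσj, _⟩ <;>
  simp only [mem_Icc] at hi hj <;> rw [hσi, hσj] <;> split_ifs <;> omega

theorem sum_pairDelta (hx : x.PossiblyMaximal) (hσ : IsAssocPerm g x σ) :
    ∑ p ∈ Icc 1 g ×ˢ Icc 1 g with p.1 < p.2, x.pairDelta p.1 p.2
      = #{p ∈ Icc 1 g ×ˢ Icc 1 g | p.1 < p.2} - (permLen g σ.symm : ℤ)
        + 2 * (#{p ∈ Icc 1 g ×ˢ Icc 1 g | p.1 < p.2 ∧ σ.symm p.2 < σ.symm p.1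
                  ∧ σ.symm p.1 < p.1}
          + permA g σ.symm
          + #{p ∈ Icc 1 g ×ˢ Icc 1 g | p.1 < p.2 ∧ x.w p.1 = p.1 ∧ x.x0 p.1 = 1
                  ∧ σ.symm p.2 < p.1}
          + #{p ∈ Icc 1 g ×ˢ Icc 1 g | p.1 < p.2 ∧ x.w p.2 = p.2 ∧ ¬x.x0 p.2 = 1
                  ∧ p.2 < σ.symm p.1} : ℤ) := by
  rw [sum_congr rfl fun p hp => by
    obtain ⟨hpI, hlt⟩ := mem_filter.1 hp
    rw [hx.pairDelta_eq hσ (mem_product.1 hpI).1 (mem_product.1 hpI).2 hlt,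
      hx.ite_unmirrored_inversion_eq hσ (mem_product.1 hpI).1 (mem_product.1 hpI).2 hlt]]
  simp only [sum_add_distrib, sum_sub_distrib, ← mul_sum, sum_boole, sum_const, nsmul_one,
    filter_filter, permLen, permA]

theorem sum_diagDelta (hx : x.PossiblyMaximal) (hσ : IsAssocPerm g x σ) :
    ∑ i ∈ Icc 1 g, x.diagDelta i = g - (permFix g σ : ℤ) + x.prank := by
  rw [sum_congr rfl fun i hi => hx.diagDelta_eq hσ hi]
  simp only [sum_add_distrib, sum_sub_distrib, sum_boole, sum_const, nsmul_one, Nat.card_Icc,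
    permFix, prank, Nat.add_sub_cancel]

end PossiblyMaximal

end AdmPair

theorem len_formula_general (g : ℕ) (x : AdmPair g)
    (hx : x.PossiblyMaximal)
    (σ : Equiv.Perm ℕ) (hσ : IsAssocPerm g x σ) :
    x.len = ((g : ℤ) * (g + 1)) / 2 + (x.prank : ℤ)
      - (permFix g σ : ℤ) - (permLen g σ : ℤ)
      + 2 * ((permA g σ : ℤ) + (permA g σ.symm : ℤ)
          + ((((Finset.Icc 1 g) ×ˢ
                ((Finset.Icc 1 g).filter (fun i => x.w i = i))).filter
              (fun p => p.1 < p.2 ∧ p.2 < σ p.1)).card : ℤ)) := by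
  have hsupp := hσ.setOf_apply_ne_subset
  have hcross := σ.card_crossing_fixed_eq hsupp (fun f => x.w f = f) (fun f => x.x0 f = 1)
    fun _ => hσ.apply_eq_self
  rw [x.len_eq_sum, hx.sum_pairDelta hσ, hx.sum_diagDelta hσ, permLen_symm hsupp,
    card_filter_symm_lt_symm_lt_eq_permA hsupp, ← card_lt_pairs_Icc_add g, ← hcross]
  push_cast
  ring

/-- The length formula for a possibly maximal μ-admissible
pair `x` with associated permutation `σ` and set `F` of fixed points of `w`
in `{1,…,g}`, `d = #F`. -/
theorem len_formula (g : ℕ) (hg : 1 ≤ g) (x : AdmPair g)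
    (hx : x.PossiblyMaximal)
    (σ : Equiv.Perm ℕ) (hσ : IsAssocPerm g x σ) :
    x.len = ((g : ℤ) * (g + 1)) / 2 + (x.prank : ℤ)
      - (permFix g σ : ℤ) - (permLen g σ : ℤ)
      + 2 * ((permA g σ : ℤ) + (permA g σ.symm : ℤ)
          + ((((Finset.Icc 1 g) ×ˢ
                ((Finset.Icc 1 g).filter (fun i => x.w i = i))).filter
              (fun p => p.1 < p.2 ∧ p.2 < σ p.1)).card : ℤ)) :=
  len_formula_general g x hx σ hσ
end

section
/- Let g ≥ 1, let 0 ≤ d ≤ g and set m = ⌊(g−d)/2⌋. Define w ∈ W as follows on {1,…,g}: w(2k−1) = 2k and w(2k) = 2k−1 for 1 ≤ k ≤ m; if g − d is odd then w(g−d) = g+d+1 (= 2g+1−(g−d)); w(i) = i for g−d < i ≤ g; and w is extended to {g+1,…,2g} by w(2g+1−i) = 2g+1−w(i). Then every μ-admissible pair x = (x_0, w) with this w satisfies ℓ(x) = ⌊(g² + d)/2⌋ (and such x_0 exist). -/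
/-- The condition on the `W`-component `w` of Statement 7: on `{1,…,g}`,
`w` interchanges `2k−1` and `2k` for `1 ≤ k ≤ ⌊(g−d)/2⌋`, sends `g−d` to
`g+d+1 = 2g+1−(g−d)` if `g − d` is odd, and fixes `i` for `g−d < i ≤ g`. -/
def SpecialW (g d : ℕ) (x : AdmPair g) : Prop :=
  (∀ k ∈ Finset.Icc 1 ((g - d) / 2), x.w (2*k-1) = 2*k ∧ x.w (2*k) = 2*k-1) ∧
  (Odd (g - d) → x.w (g - d) = g + d + 1) ∧
  (∀ i ∈ Finset.Icc 1 g, g - d < i → x.w i = i)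

/-!
On `{1,…,g}` the permutation `w` is the explicit involution `specialOnHalf g (g - d)`: it swaps
`2k-1` and `2k`, sends `g-d` across the middle when `g-d` is odd, and fixes the rest; its
symmetric extension to `{1,…,2g}` is again an involution, so `w⁻¹ = w`. Admissibility forces
`x₀(i) = 0` when `i < w(i)` and `x₀(i) = 1` when `w(i) < i`, and for `a, b ∈ {0,1}` one has
`|a - b| + |a + b - 1| = 1`. Hence every pair `i < j` contributes `δ¹ + δ² = 1`, except the
`⌊(g-d)/2⌋` swapped pairs, which contribute `0`, and every `i` contributes `δ³ = 1`, except `g-d`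
when it is odd. Summing, `2ℓ(x) = g² + g - 2⌈(g-d)/2⌉`, whatever `x₀` is on the fixed points.
-/

open Finset

theorem two_mul_sum_sum_ite_lt {α : Type*} [LinearOrder α] (s : Finset α) :
    2 * ∑ i ∈ s, ∑ j ∈ s, (if i < j then (1 : ℤ) else 0) = #s * #s - #s := by
  have hflip : ∑ i ∈ s, ∑ j ∈ s, (if i < j then (1 : ℤ) else 0) =
      ∑ i ∈ s, ∑ j ∈ s, (if j < i then (1 : ℤ) else 0) := sum_comm
  have hsplit : ∀ i j : α, (1 : ℤ) =
      (if i < j then 1 else 0) + (if j < i then 1 else 0) + (if i = j then 1 else 0) := by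
    intro i j
    rcases lt_trichotomy i j with hij | rfl | hij
    · simp [hij, hij.not_gt, hij.ne]
    · simp
    · simp [hij, hij.not_gt, hij.ne']
  have htotal : ∑ i ∈ s, ∑ j ∈ s, (1 : ℤ) = #s * #s := by simp
  rw [sum_congr rfl fun i _ => sum_congr rfl fun j _ => hsplit i j] at htotal
  have hdiag : ∑ i ∈ s, ∑ j ∈ s, (if i = j then (1 : ℤ) else 0) = #s := by simp
  simp only [sum_add_distrib, hdiag] at htotal
  linarith

theorem sum_sum_ite_lt_ite_eq {α : Type*} [LinearOrder α] {s : Finset α} {f : α → α}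
    (hf : ∀ j ∈ s, f j < j → f j ∈ s) :
    ∑ i ∈ s, ∑ j ∈ s, (if i < j then (if f j = i then 0 else 1 : ℤ) else 0) =
      ∑ i ∈ s, ∑ j ∈ s, (if i < j then (1 : ℤ) else 0) - #{j ∈ s | f j < j} := by
  have hcount : (#{j ∈ s | f j < j} : ℤ) =
      ∑ i ∈ s, ∑ j ∈ s, (if f j = i then (if i < j then 1 else 0) else 0) := by
    rw [natCast_card_filter, sum_comm]
    refine sum_congr rfl fun j hj => ?_
    rw [sum_ite_eq]
    by_cases hlt : f j < j
    · rw [if_pos (hf j hj hlt), if_pos hlt]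
    · rw [if_neg hlt, ite_self]
  rw [hcount, ← sum_sub_distrib]
  refine sum_congr rfl fun i _ => ?_
  rw [← sum_sub_distrib]
  refine sum_congr rfl fun j _ => ?_
  split_ifs <;> simp

def symmExt (g : ℕ) (f : ℕ → ℕ) (i : ℕ) : ℕ :=
  if 1 ≤ i ∧ i ≤ g then f i
  else if g < i ∧ i ≤ 2 * g then 2 * g + 1 - f (2 * g + 1 - i) else i

def x0Ext (g : ℕ) (a : ℕ → ℤ) (i : ℕ) : ℤ :=
  if 1 ≤ i ∧ i ≤ g then a i
  else if g < i ∧ i ≤ 2 * g then 1 - a (2 * g + 1 - i) else 0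

namespace AdmPair

variable {g : ℕ} (x : AdmPair g)

theorem w_eq_symmExt {f : ℕ → ℕ} (h : ∀ i ∈ Icc 1 g, x.w i = f i) (i : ℕ) :
    x.w i = symmExt g f i := by
  unfold symmExt
  split_ifs with hlow hhigh
  · exact h i (mem_Icc.2 hlow)
  · have hw := x.w_symm (2 * g + 1 - i) (mem_Icc.2 ⟨by omega, by omega⟩)
    rw [Nat.sub_sub_self (by omega)] at hw
    rw [hw, h (2 * g + 1 - i) (mem_Icc.2 ⟨by omega, by omega⟩)]
  · exact x.w_fix i (by rw [mem_Icc]; omega)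

def ofHalf (f : ℕ → ℕ) (hinv : Function.Involutive (symmExt g f))
    (hle : ∀ i ∈ Icc 1 g, f i ≤ 2 * g) (a : ℕ → ℤ) (ha : ∀ i ∈ Icc 1 g, a i = 0 ∨ a i = 1)
    (hgt : ∀ i ∈ Icc 1 g, i < f i → a i = 0) (hlt : ∀ i ∈ Icc 1 g, f i < i → a i = 1) :
    AdmPair g where
  w := hinv.toPerm
  x0 := x0Ext g a
  w_fix i hi := by
    rw [mem_Icc] at hi
    simp only [Function.Involutive.coe_toPerm, symmExt]
    split_ifs <;> omega
  w_symm i hi := by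
    rw [mem_Icc] at hi
    have hmirror : 2 * g + 1 - (2 * g + 1 - i) = i := by omega
    have hbound : g < i → f (2 * g + 1 - i) ≤ 2 * g :=
      fun hgi => hle _ (mem_Icc.2 ⟨by omega, by omega⟩)
    simp only [Function.Involutive.coe_toPerm, symmExt, hmirror]
    split_ifs <;> omega
  x0_mem i hi := by
    rw [mem_Icc] at hi
    unfold x0Ext
    split_ifs
    · exact ha i (mem_Icc.2 (by omega))
    · rcases ha (2 * g + 1 - i) (mem_Icc.2 ⟨by omega, by omega⟩) with h | h <;> simp [h]
    · omega
  x0_out i hi := by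
    rw [mem_Icc] at hi
    unfold x0Ext
    split_ifs <;> first | rfl | omega
  x0_sum i hi := by
    rw [mem_Icc] at hi
    have hmirror : 2 * g + 1 - (2 * g + 1 - i) = i := by omega
    simp only [x0Ext, hmirror]
    split_ifs <;> omega
  x0_gt i hi hi' := by
    rw [mem_Icc] at hi
    simp only [Function.Involutive.toPerm_symm, Function.Involutive.coe_toPerm, symmExt] at hi'
    unfold x0Ext
    split_ifs at hi' ⊢ with h₁ h₂
    · exact hgt i (mem_Icc.2 h₁) hi'
    · rw [hlt _ (mem_Icc.2 ⟨by omega, by omega⟩) (by omega), sub_self]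
    all_goals omega
  x0_lt i hi hi' := by
    rw [mem_Icc] at hi
    simp only [Function.Involutive.toPerm_symm, Function.Involutive.coe_toPerm, symmExt] at hi'
    unfold x0Ext
    split_ifs at hi' ⊢ with h₁ h₂
    · exact hlt i (mem_Icc.2 h₁) hi'
    · have := hle (2 * g + 1 - i) (mem_Icc.2 ⟨by omega, by omega⟩)
      rw [hgt _ (mem_Icc.2 ⟨by omega, by omega⟩) (by omega), sub_zero]
    all_goals omega

theorem ofHalf_w_apply_of_mem {f : ℕ → ℕ} {hinv : Function.Involutive (symmExt g f)}
    {hle : ∀ i ∈ Icc 1 g, f i ≤ 2 * g} {a : ℕ → ℤ} {ha : ∀ i ∈ Icc 1 g, a i = 0 ∨ a i = 1}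
    {hgt : ∀ i ∈ Icc 1 g, i < f i → a i = 0} {hlt : ∀ i ∈ Icc 1 g, f i < i → a i = 1}
    {i : ℕ} (hi : i ∈ Icc 1 g) : (ofHalf f hinv hle a ha hgt hlt).w i = f i :=
  if_pos (mem_Icc.1 hi)

def pairLen (i j : ℕ) : ℤ :=
  (if x.w.symm i < x.w.symm j then |x.x0 i - x.x0 j| else |x.x0 i - x.x0 j + 1|) +
  (if x.w.symm i < x.w.symm (2*g+1-j) then |x.x0 i + x.x0 j - 1| else |x.x0 i + x.x0 j|)

def diagLen (i : ℕ) : ℤ :=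
  if x.w.symm i < x.w.symm (2*g+1-i) then |2 * x.x0 i - 1| else |2 * x.x0 i|

theorem len_eq_sum_pairLen_add_sum_diagLen :
    x.len = (∑ i ∈ Icc 1 g, ∑ j ∈ Icc 1 g, if i < j then x.pairLen i j else 0) +
      ∑ i ∈ Icc 1 g, x.diagLen i := by
  simp only [len, pairLen, diagLen, ← sum_add_distrib, ite_add_ite, add_zero]

theorem pairLen_eq_one_of_lt {i j : ℕ} (hi : i ∈ Icc 1 (2 * g)) (hj : j ∈ Icc 1 (2 * g))
    (h₁ : x.w.symm i < x.w.symm j) (h₂ : x.w.symm i < x.w.symm (2 * g + 1 - j)) :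
    x.pairLen i j = 1 := by
  rw [pairLen, if_pos h₁, if_pos h₂]
  rcases x.x0_mem i hi with ha | ha <;> rcases x.x0_mem j hj with hb | hb <;> simp [ha, hb]

theorem pairLen_eq_one_of_ge {i j : ℕ} (hj : j ∈ Icc 1 (2 * g)) (hi0 : x.x0 i = 0)
    (h₁ : x.w.symm j ≤ x.w.symm i) (h₂ : x.w.symm (2 * g + 1 - j) ≤ x.w.symm i) :
    x.pairLen i j = 1 := by
  rw [pairLen, if_neg h₁.not_gt, if_neg h₂.not_gt, hi0]
  rcases x.x0_mem j hj with hb | hb <;> simp [hb]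

theorem pairLen_eq_zero_of_swap {i j : ℕ} (hi0 : x.x0 i = 0) (hj1 : x.x0 j = 1)
    (h₁ : x.w.symm j ≤ x.w.symm i) (h₂ : x.w.symm i < x.w.symm (2 * g + 1 - j)) :
    x.pairLen i j = 0 := by
  rw [pairLen, if_neg h₁.not_gt, if_pos h₂, hi0, hj1]
  norm_num

theorem diagLen_eq_one_of_lt {i : ℕ} (hi : i ∈ Icc 1 (2 * g))
    (h : x.w.symm i < x.w.symm (2 * g + 1 - i)) : x.diagLen i = 1 := by
  rw [diagLen, if_pos h]
  rcases x.x0_mem i hi with ha | ha <;> simp [ha]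

theorem diagLen_eq_zero_of_ge {i : ℕ} (hi0 : x.x0 i = 0)
    (h : x.w.symm (2 * g + 1 - i) ≤ x.w.symm i) : x.diagLen i = 0 := by
  rw [diagLen, if_neg h.not_gt, hi0]
  norm_num

end AdmPair

-- With `r = g - d`, the middle branch is the single index `i = r`, reached only when `r` is odd.
def specialOnHalf (g r i : ℕ) : ℕ :=
  if i ≤ 2 * (r / 2) then (if i % 2 = 1 then i + 1 else i - 1)
  else if i ≤ r then 2 * g + 1 - i else i

theorem symmExt_specialOnHalf_involutive {g r : ℕ} (hr : r ≤ g) :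
    Function.Involutive (symmExt g (specialOnHalf g r)) := by
  intro i
  simp only [symmExt, specialOnHalf]
  split_ifs <;> omega

theorem card_filter_specialOnHalf_lt {g r : ℕ} (hr : r ≤ g) :
    #{j ∈ Icc 1 g | specialOnHalf g r j < j} = r / 2 := by
  rw [← Nat.Ioc_filter_dvd_card_eq_div r 2]
  congr 1
  ext j
  simp only [mem_filter, mem_Icc, mem_Ioc]
  unfold specialOnHalf
  split_ifs <;> omega

theorem card_filter_lt_specialOnHalf {g r : ℕ} (hr : r ≤ g) :
    #{j ∈ Icc 1 g | g < specialOnHalf g r j} = r % 2 := by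
  rw [show {j ∈ Icc 1 g | g < specialOnHalf g r j} = Ioc (2 * (r / 2)) r by
    ext j
    simp only [mem_filter, mem_Icc, mem_Ioc]
    unfold specialOnHalf
    split_ifs <;> omega, Nat.card_Ioc]
  omega

theorem specialW_iff {g d : ℕ} (hd : d ≤ g) (x : AdmPair g) :
    SpecialW g d x ↔ ∀ i ∈ Icc 1 g, x.w i = specialOnHalf g (g - d) i := by
  constructor
  · rintro ⟨hpair, hodd, hfix⟩ i hi
    rw [mem_Icc] at hi
    unfold specialOnHalf
    split_ifs with h2 hpar hr
    · have := (hpair ((i + 1) / 2) (mem_Icc.2 ⟨by omega, by omega⟩)).1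
      rwa [show 2 * ((i + 1) / 2) - 1 = i by omega, show 2 * ((i + 1) / 2) = i + 1 by omega] at this
    · have := (hpair (i / 2) (mem_Icc.2 ⟨by omega, by omega⟩)).2
      rwa [show 2 * (i / 2) = i by omega] at this
    · rw [show i = g - d by omega, hodd (Nat.odd_iff.2 (by omega))]
      omega
    · exact hfix i (mem_Icc.2 hi) (by omega)
  · intro h
    refine ⟨fun k hk => ?_, fun hodd => ?_, fun i hi hlt => ?_⟩
    · rw [mem_Icc] at hk
      rw [h _ (mem_Icc.2 ⟨by omega, by omega⟩), h _ (mem_Icc.2 ⟨by omega, by omega⟩)]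
      simp only [specialOnHalf]
      constructor <;> split_ifs <;> omega
    · rw [Nat.odd_iff] at hodd
      rw [h _ (mem_Icc.2 ⟨by omega, by omega⟩)]
      simp only [specialOnHalf]
      split_ifs <;> omega
    · rw [h i hi, specialOnHalf, if_neg (by omega), if_neg (by omega)]

namespace AdmPair

variable {g : ℕ} (x : AdmPair g)

variable {r : ℕ} (hr : r ≤ g) (h : ∀ i ∈ Icc 1 g, x.w i = specialOnHalf g r i)
include hr h

theorem symm_apply_eq_symmExt (i : ℕ) : x.w.symm i = symmExt g (specialOnHalf g r) i := by
  rw [Equiv.symm_apply_eq, x.w_eq_symmExt h, symmExt_specialOnHalf_involutive hr]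

theorem symm_apply_of_mem {i : ℕ} (hi : i ∈ Icc 1 g) : x.w.symm i = specialOnHalf g r i := by
  rw [x.symm_apply_eq_symmExt hr h, symmExt, if_pos (mem_Icc.1 hi)]

theorem symm_apply_mirror {i : ℕ} (hi : i ∈ Icc 1 g) :
    x.w.symm (2 * g + 1 - i) = 2 * g + 1 - specialOnHalf g r i := by
  rw [mem_Icc] at hi
  rw [x.symm_apply_eq_symmExt hr h, symmExt, if_neg (by omega), if_pos (by omega),
    Nat.sub_sub_self (by omega)]

theorem x0_eq_zero_of_lt_specialOnHalf {i : ℕ} (hi : i ∈ Icc 1 g) (hlt : i < specialOnHalf g r i) :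
    x.x0 i = 0 := by
  rw [mem_Icc] at hi
  exact x.x0_gt i (mem_Icc.2 ⟨hi.1, by omega⟩) (by rwa [x.symm_apply_of_mem hr h (mem_Icc.2 hi)])

theorem x0_eq_one_of_specialOnHalf_lt {i : ℕ} (hi : i ∈ Icc 1 g) (hlt : specialOnHalf g r i < i) :
    x.x0 i = 1 := by
  rw [mem_Icc] at hi
  exact x.x0_lt i (mem_Icc.2 ⟨hi.1, by omega⟩) (by rwa [x.symm_apply_of_mem hr h (mem_Icc.2 hi)])

theorem pairLen_eq_of_specialOnHalf {i j : ℕ} (hi : i ∈ Icc 1 g) (hj : j ∈ Icc 1 g) (hij : i < j) :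
    x.pairLen i j = if specialOnHalf g r j = i then 0 else 1 := by
  have hi' := mem_Icc.1 hi
  have hj' := mem_Icc.1 hj
  have hsi := x.symm_apply_of_mem hr h hi
  have hsj := x.symm_apply_of_mem hr h hj
  have hsj' := x.symm_apply_mirror hr h hj
  split_ifs with hswap
  · have hτi : specialOnHalf g r i = j := by
      simp only [specialOnHalf] at hswap ⊢
      split_ifs at hswap ⊢ <;> omega
    exact x.pairLen_eq_zero_of_swap (x.x0_eq_zero_of_lt_specialOnHalf hr h hi (by omega))
      (x.x0_eq_one_of_specialOnHalf_lt hr h hj (by omega)) (by omega) (by omega)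
  by_cases hcross : g < specialOnHalf g r i
  · have hτ : specialOnHalf g r i = 2 * g + 1 - i ∧ specialOnHalf g r j = j := by
      simp only [specialOnHalf] at hcross ⊢
      split_ifs at hcross ⊢ <;> omega
    exact x.pairLen_eq_one_of_ge (mem_Icc.2 ⟨hj'.1, by omega⟩)
      (x.x0_eq_zero_of_lt_specialOnHalf hr h hi (by omega)) (by omega) (by omega)
  · have hτ : specialOnHalf g r i < specialOnHalf g r j ∧
        specialOnHalf g r i + specialOnHalf g r j ≤ 2 * g := by
      simp only [specialOnHalf] at hswap hcross ⊢
      split_ifs at hswap hcross ⊢ <;> omega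
    exact x.pairLen_eq_one_of_lt (mem_Icc.2 ⟨hi'.1, by omega⟩) (mem_Icc.2 ⟨hj'.1, by omega⟩)
      (by omega) (by omega)

theorem diagLen_eq_of_specialOnHalf {i : ℕ} (hi : i ∈ Icc 1 g) :
    x.diagLen i = if g < specialOnHalf g r i then 0 else 1 := by
  have hi' := mem_Icc.1 hi
  have hsi := x.symm_apply_of_mem hr h hi
  have hsi' := x.symm_apply_mirror hr h hi
  have hτ : 1 ≤ specialOnHalf g r i ∧ specialOnHalf g r i ≤ 2 * g := by
    simp only [specialOnHalf]
    split_ifs <;> omega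
  split_ifs with hcross
  · exact x.diagLen_eq_zero_of_ge (x.x0_eq_zero_of_lt_specialOnHalf hr h hi (by omega)) (by omega)
  · exact x.diagLen_eq_one_of_lt (mem_Icc.2 ⟨hi'.1, by omega⟩) (by omega)

theorem two_mul_len_of_specialOnHalf :
    2 * x.len = (g : ℤ) ^ 2 + g - 2 * ((r + 1) / 2 : ℕ) := by
  have hpair : ∑ i ∈ Icc 1 g, ∑ j ∈ Icc 1 g, (if i < j then x.pairLen i j else 0) =
      ∑ i ∈ Icc 1 g, ∑ j ∈ Icc 1 g,
        (if i < j then (if specialOnHalf g r j = i then 0 else 1 : ℤ) else 0) :=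
    sum_congr rfl fun i hi => sum_congr rfl fun j hj => by
      by_cases hij : i < j
      · rw [if_pos hij, if_pos hij, x.pairLen_eq_of_specialOnHalf hr h hi hj hij]
      · rw [if_neg hij, if_neg hij]
  have hdiag : ∑ i ∈ Icc 1 g, x.diagLen i = g - #{i ∈ Icc 1 g | g < specialOnHalf g r i} := by
    rw [sum_congr rfl fun i hi => x.diagLen_eq_of_specialOnHalf hr h hi, natCast_card_filter,
      eq_sub_iff_add_eq, ← sum_add_distrib]
    simp only [ite_add_ite, zero_add, add_zero, ite_self, sum_const, Nat.card_Icc,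
      Nat.add_sub_cancel, nsmul_eq_mul, mul_one]
  have hback : ∀ j ∈ Icc 1 g, specialOnHalf g r j < j → specialOnHalf g r j ∈ Icc 1 g := by
    intro j hj hlt
    rw [mem_Icc] at hj ⊢
    unfold specialOnHalf at hlt ⊢
    split_ifs at hlt ⊢ <;> omega
  have hsquare := two_mul_sum_sum_ite_lt (Icc 1 g)
  rw [len_eq_sum_pairLen_add_sum_diagLen, hpair, hdiag, sum_sum_ite_lt_ite_eq hback,
    card_filter_specialOnHalf_lt hr, card_filter_lt_specialOnHalf hr]
  rw [Nat.card_Icc, Nat.add_sub_cancel] at hsquare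
  have hr2 : r / 2 + r % 2 = (r + 1) / 2 := by omega
  rw [← hr2]
  push_cast
  linear_combination hsquare

end AdmPair

def specialPair {g r : ℕ} (hr : r ≤ g) : AdmPair g :=
  AdmPair.ofHalf (specialOnHalf g r) (symmExt_specialOnHalf_involutive hr)
    (fun i hi => by
      rw [mem_Icc] at hi
      unfold specialOnHalf
      split_ifs <;> omega)
    (fun i => if specialOnHalf g r i < i then 1 else 0) (fun i _ => by split_ifs <;> simp)
    (fun _ _ hlt => if_neg hlt.le.not_gt) (fun _ _ hlt => if_pos hlt)

theorem special_w_len_general (g d : ℕ) (hd : d ≤ g) :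
    (∃ x : AdmPair g, SpecialW g d x) ∧
    (∀ x : AdmPair g, SpecialW g d x →
      x.len = ((g : ℤ)^2 + (d : ℤ)) / 2) := by
  refine ⟨⟨specialPair (Nat.sub_le g d), (specialW_iff hd _).2 fun i hi => ?_⟩, fun x hx => ?_⟩
  · exact AdmPair.ofHalf_w_apply_of_mem hi
  · have hlen := x.two_mul_len_of_specialOnHalf (Nat.sub_le g d) ((specialW_iff hd x).1 hx)
    generalize (g : ℤ) ^ 2 = G at hlen ⊢
    omega

/-- Every μ-admissible pair with the explicit `W`-component
above has length `⌊(g² + d)/2⌋`, and such pairs exist. -/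
theorem special_w_len (g d : ℕ) (hg : 1 ≤ g) (hd : d ≤ g) :
    (∃ x : AdmPair g, SpecialW g d x) ∧
    (∀ x : AdmPair g, SpecialW g d x →
      x.len = ((g : ℤ)^2 + (d : ℤ)) / 2) :=
  special_w_len_general g d hd
end

section
/- For every natural number m, the number of fixed-point-free involutions σ of {1,…,2m} with C_σ = 0 equals the m-th Catalan number Cat(m). -/
/-- `A_σ = #{(i,j) : i < j < σ(j) < σ(i)}` for a permutation `σ` of `Fin n`
(encoding a permutation of `{1,…,n}`). -/
def Acnt {n : ℕ} (σ : Equiv.Perm (Fin n)) : ℕ :=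
  (Finset.univ.filter (fun p : Fin n × Fin n =>
    p.1 < p.2 ∧ p.2 < σ p.2 ∧ σ p.2 < σ p.1)).card

/-- `B_σ = #{(i,j) : i < j = σ(j) < σ(i)}`. -/
def Bcnt {n : ℕ} (σ : Equiv.Perm (Fin n)) : ℕ :=
  (Finset.univ.filter (fun p : Fin n × Fin n =>
    p.1 < p.2 ∧ σ p.2 = p.2 ∧ p.2 < σ p.1)).card

/-- `C_σ = #{(i,j) : i < j < σ(i) < σ(j)}`. -/
def Ccnt {n : ℕ} (σ : Equiv.Perm (Fin n)) : ℕ :=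
  (Finset.univ.filter (fun p : Fin n × Fin n =>
    p.1 < p.2 ∧ p.2 < σ p.1 ∧ σ p.1 < σ p.2)).card

/-- The number of inversions of `σ` (its Coxeter length in `S_n`). -/
def invCnt {n : ℕ} (σ : Equiv.Perm (Fin n)) : ℕ :=
  (Finset.univ.filter (fun p : Fin n × Fin n =>
    p.1 < p.2 ∧ σ p.2 < σ p.1)).card


/-!
A fixed-point-free involution `σ` with `C_σ = 0` is a perfect matching whose arcs `{i, σ i}` do
not cross. If `0` is matched with `j + 1`, no arc crosses `{0, j + 1}`, so `σ` restricts to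
noncrossing matchings of the inside `{1, …, j}` and of the outside `{j + 2, …, n + 1}`, and any
two such matchings glue back. Hence the number `a n` of noncrossing perfect matchings of
`{0, …, n - 1}` satisfies `a (n + 2) = ∑_{j ≤ n} a j * a (n - j)` with `a 0 = 1`; since `a`
vanishes at odd arguments, `a (2 * m)` satisfies the Catalan recurrence.
-/

open Function Finset

structure IsNoncrossingMatching {α : Type*} [LT α] (f : α → α) : Prop where
  involutive : Involutive f
  ne_self : ∀ x, f x ≠ x
  noncrossing : ∀ ⦃i j⦄, i < j → j < f i → ¬ f i < f j

namespace IsNoncrossingMatching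

variable {α β : Type*} [LinearOrder α] [LinearOrder β] {f : α → α}

theorem mapsTo_Ioo (hf : IsNoncrossingMatching f) (a : α) :
    Set.MapsTo f (Set.Ioo a (f a)) (Set.Ioo a (f a)) := by
  rintro x ⟨hax, hxa⟩
  have hxa' : f x ≠ a := fun h => hxa.ne (by rw [← h, hf.involutive])
  have hax' : f x ≠ f a := fun h => hax.ne' (hf.involutive.injective h)
  refine ⟨lt_of_le_of_ne (not_lt.1 fun h => ?_) hxa'.symm,
    lt_of_le_of_ne (not_lt.1 (hf.noncrossing hax hxa)) hax'⟩
  exact hf.noncrossing h (by rwa [hf.involutive]) (by rwa [hf.involutive])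

theorem of_semiconj (hf : IsNoncrossingMatching f) {e : β → α} (he : StrictMono e)
    {g : β → β} (h : Semiconj e g f) : IsNoncrossingMatching g where
  involutive y := he.injective (by rw [h, h, hf.involutive])
  ne_self y hy := hf.ne_self (e y) (by rw [← h, hy])
  noncrossing i j hij hji hg := hf.noncrossing (he hij) (h i ▸ he hji) (h i ▸ h j ▸ he hg)

end IsNoncrossingMatching

theorem Function.Involutive.even_card_of_forall_ne {α : Type*} [Fintype α] {f : α → α}
    (hf : Involutive f) (hne : ∀ x, f x ≠ x) : Even (Fintype.card α) := by
  classical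
  have := Equiv.Perm.card_fixedPoints_modEq (p := 2) (n := 1) (f := f) (funext hf)
  have hfix : Fintype.card (fixedPoints (f : Function.End α)) = 0 :=
    Fintype.card_eq_zero_iff.2 ⟨fun x => hne x x.2⟩
  rw [hfix] at this
  exact Nat.even_iff.2 this

theorem Finset.sum_range_two_mul_add_one_eq_of_odd_eq_zero {M : Type*} [AddCommMonoid M]
    {f : ℕ → M} (hf : ∀ i, f (2 * i + 1) = 0) (m : ℕ) :
    ∑ j ∈ range (2 * m + 1), f j = ∑ i ∈ range (m + 1), f (2 * i) := by
  induction m with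
  | zero => simp
  | succ m ih =>
    rw [show 2 * (m + 1) + 1 = 2 * m + 1 + 1 + 1 by ring, sum_range_succ, sum_range_succ, ih, hf,
      sum_range_succ _ (m + 1), add_zero, mul_add_one]

theorem ccnt_eq_zero_iff {n : ℕ} (σ : Equiv.Perm (Fin n)) :
    Ccnt σ = 0 ↔ ∀ ⦃i j⦄, i < j → j < σ i → ¬ σ i < σ j := by
  simp [Ccnt, Finset.filter_eq_empty_iff]

abbrev NoncrossingMatching (n : ℕ) : Type := {f : Fin n → Fin n // IsNoncrossingMatching f}

namespace NoncrossingMatching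

def permSubtypeEquiv (n : ℕ) :
    {σ : Equiv.Perm (Fin n) // (∀ i, σ (σ i) = i) ∧ (∀ i, σ i ≠ i) ∧ Ccnt σ = 0} ≃
      NoncrossingMatching n where
  toFun σ := ⟨σ.1, σ.2.1, σ.2.2.1, (ccnt_eq_zero_iff _).1 σ.2.2.2⟩
  invFun f := ⟨f.2.involutive.toPerm, f.2.involutive, f.2.ne_self,
    (ccnt_eq_zero_iff _).2 f.2.noncrossing⟩
  left_inv _ := Subtype.ext (Equiv.ext fun _ => rfl)
  right_inv _ := rfl

section Glue

variable {n : ℕ} (j : Fin (n + 1))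

/- The arc `{0, pivot j}` of `Fin (n + 2)` separates the block `inner j` from the block
`outer j`. -/
def pivot : Fin (n + 2) := ⟨j + 1, by omega⟩

def inner (y : Fin j) : Fin (n + 2) := ⟨y + 1, by omega⟩

def outer (y : Fin (n - j)) : Fin (n + 2) := ⟨y + j + 2, by omega⟩

@[simp] theorem val_pivot : (pivot j : ℕ) = j + 1 := rfl

@[simp] theorem val_inner (y : Fin j) : (inner j y : ℕ) = y + 1 := rfl

@[simp] theorem val_outer (y : Fin (n - j)) : (outer j y : ℕ) = y + j + 2 := rfl

theorem strictMono_inner : StrictMono (inner j) := fun _ _ h => Fin.mk_lt_mk.2 (by simpa using h)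

theorem strictMono_outer : StrictMono (outer j) := fun _ _ h => Fin.mk_lt_mk.2 (by simpa using h)

theorem pivot_injective : Injective (pivot : Fin (n + 1) → Fin (n + 2)) :=
  fun _ _ h => Fin.ext (by simpa [pivot] using h)

theorem eq_zero_or_pivot_or_inner_or_outer (x : Fin (n + 2)) :
    x = 0 ∨ x = pivot j ∨ (∃ y, x = inner j y) ∨ ∃ y, x = outer j y := by
  by_cases h₀ : (x : ℕ) = 0
  · exact .inl (Fin.ext h₀)
  by_cases h₁ : (x : ℕ) = j + 1
  · exact .inr (.inl (Fin.ext h₁))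
  by_cases h₂ : (x : ℕ) < j + 1
  · exact .inr (.inr (.inl ⟨⟨x - 1, by omega⟩, Fin.ext (by simp [inner]; omega)⟩))
  · exact .inr (.inr (.inr ⟨⟨x - (j + 2), by omega⟩, Fin.ext (by simp [outer]; omega)⟩))

theorem inner_lt_pivot (y : Fin j) : inner j y < pivot j := Fin.mk_lt_mk.2 (by omega)

theorem pivot_lt_outer (y : Fin (n - j)) : pivot j < outer j y := Fin.mk_lt_mk.2 (by omega)

theorem zero_lt_inner (y : Fin j) : 0 < inner j y := Fin.lt_def.2 (by simp [inner])

def glue (τ : Fin j → Fin j) (ρ : Fin (n - j) → Fin (n - j)) (x : Fin (n + 2)) :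
    Fin (n + 2) :=
  if h₀ : (x : ℕ) = 0 then pivot j
  else if h₁ : (x : ℕ) < j + 1 then inner j (τ ⟨x - 1, by omega⟩)
  else if h₂ : (x : ℕ) = j + 1 then 0
  else outer j (ρ ⟨x - (j + 2), by omega⟩)

variable (τ : Fin j → Fin j) (ρ : Fin (n - j) → Fin (n - j))

@[simp] theorem glue_zero : glue j τ ρ 0 = pivot j := by simp [glue]

@[simp] theorem glue_pivot : glue j τ ρ (pivot j) = 0 := by simp [glue, pivot]

@[simp] theorem glue_inner (y : Fin j) : glue j τ ρ (inner j y) = inner j (τ y) := by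
  simp [glue, inner]

@[simp] theorem glue_outer (y : Fin (n - j)) : glue j τ ρ (outer j y) = outer j (ρ y) := by
  have h₁ : ¬ (y : ℕ) + j + 2 < j + 1 := by omega
  have h₂ : (y : ℕ) + j + 2 ≠ j + 1 := by omega
  simp [glue, outer, h₁, h₂]

variable {τ ρ} in
theorem isNoncrossingMatching_glue (hτ : IsNoncrossingMatching τ)
    (hρ : IsNoncrossingMatching ρ) : IsNoncrossingMatching (glue j τ ρ) where
  involutive x := by
    rcases eq_zero_or_pivot_or_inner_or_outer j x with rfl | rfl | ⟨y, rfl⟩ | ⟨y, rfl⟩ <;>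
      simp [hτ.involutive _, hρ.involutive _]
  ne_self x := by
    rcases eq_zero_or_pivot_or_inner_or_outer j x with rfl | rfl | ⟨y, rfl⟩ | ⟨y, rfl⟩
    · exact glue_zero j τ ρ ▸ (Fin.lt_def.2 (by simp)).ne'
    · exact glue_pivot j τ ρ ▸ (Fin.lt_def.2 (by simp)).ne
    · simpa using (strictMono_inner j).injective.ne (hτ.ne_self y)
    · simpa using (strictMono_outer j).injective.ne (hρ.ne_self y)
  noncrossing x z hxz hzx hlt := by
    rcases eq_zero_or_pivot_or_inner_or_outer j x with rfl | rfl | ⟨y, rfl⟩ | ⟨y, rfl⟩ <;>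
    rcases eq_zero_or_pivot_or_inner_or_outer j z with rfl | rfl | ⟨w, rfl⟩ | ⟨w, rfl⟩ <;>
    simp only [glue_zero, glue_pivot, glue_inner, glue_outer, (strictMono_inner j).lt_iff_lt,
      (strictMono_outer j).lt_iff_lt] at hxz hzx hlt
    all_goals first
      | exact hτ.noncrossing hxz hzx hlt
      | exact hρ.noncrossing hxz hzx hlt
      | simp only [Fin.lt_def, val_pivot, val_inner, val_outer, Fin.val_zero] at hxz hzx hlt; omega

end Glue

variable {n : ℕ}

theorem exists_glue_eq {f : Fin (n + 2) → Fin (n + 2)} (hf : IsNoncrossingMatching f) :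
    ∃ j τ ρ, IsNoncrossingMatching τ ∧ IsNoncrossingMatching ρ ∧ glue j τ ρ = f := by
  have h0 : (f 0 : ℕ) ≠ 0 := Fin.val_ne_iff.2 (hf.ne_self 0)
  set j : Fin (n + 1) := ⟨f 0 - 1, by omega⟩
  have hj : f 0 = pivot j := Fin.ext (by simp [j]; omega)
  have inner_mem y : ∃ z, inner j z = f (inner j y) := by
    have := hf.mapsTo_Ioo 0 ⟨zero_lt_inner j y, hj ▸ inner_lt_pivot j y⟩
    rcases eq_zero_or_pivot_or_inner_or_outer j (f (inner j y)) with h | h | ⟨z, h⟩ | ⟨z, h⟩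
    · exact absurd (h ▸ this.1) (lt_irrefl 0)
    · exact absurd (h ▸ hj ▸ this.2) (lt_irrefl _)
    · exact ⟨z, h.symm⟩
    · exact absurd (h ▸ hj ▸ this.2) (pivot_lt_outer j z).asymm
  have outer_mem y : ∃ z, outer j z = f (outer j y) := by
    rcases eq_zero_or_pivot_or_inner_or_outer j (f (outer j y)) with h | h | ⟨z, h⟩ | ⟨z, h⟩
    · have : outer j y = pivot j := by rw [← hj, ← h, hf.involutive]
      exact absurd this (pivot_lt_outer j y).ne'
    · have : outer j y = 0 := hf.involutive.injective (h.trans hj.symm)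
      exact absurd this ((Fin.zero_le _).trans_lt (pivot_lt_outer j y)).ne'
    · have := hf.mapsTo_Ioo 0 ⟨h ▸ zero_lt_inner j z, h ▸ hj ▸ inner_lt_pivot j z⟩
      rw [hf.involutive, hj] at this
      exact absurd this.2 (pivot_lt_outer j y).asymm
    · exact ⟨z, h.symm⟩
  choose τ hτ using inner_mem
  choose ρ hρ using outer_mem
  refine ⟨j, τ, ρ, hf.of_semiconj (strictMono_inner j) hτ,
    hf.of_semiconj (strictMono_outer j) hρ, funext fun x => ?_⟩
  rcases eq_zero_or_pivot_or_inner_or_outer j x with rfl | rfl | ⟨y, rfl⟩ | ⟨y, rfl⟩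
  · simp [hj]
  · rw [glue_pivot, ← hj, hf.involutive]
  · simp [hτ]
  · simp [hρ]

def glueMap (n : ℕ) :
    (Σ j : Fin (n + 1), NoncrossingMatching j × NoncrossingMatching (n - j)) →
      NoncrossingMatching (n + 2) :=
  fun ⟨j, τ, ρ⟩ => ⟨glue j τ ρ, isNoncrossingMatching_glue j τ.2 ρ.2⟩

theorem glueMap_bijective (n : ℕ) : Bijective (glueMap n) := by
  refine ⟨?_, fun ⟨f, hf⟩ => ?_⟩
  · rintro ⟨j, τ, ρ⟩ ⟨j', τ', ρ'⟩ h
    have h' : glue j τ ρ = glue j' τ' ρ' := congrArg Subtype.val h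
    obtain rfl : j = j' := pivot_injective (by simpa using congrFun h' 0)
    obtain rfl : τ = τ' := Subtype.ext <| funext fun y =>
      (strictMono_inner j).injective (by simpa using congrFun h' (inner j y))
    obtain rfl : ρ = ρ' := Subtype.ext <| funext fun y =>
      (strictMono_outer j).injective (by simpa using congrFun h' (outer j y))
    rfl
  · obtain ⟨j, τ, ρ, hτ, hρ, rfl⟩ := exists_glue_eq hf
    exact ⟨⟨j, ⟨τ, hτ⟩, ⟨ρ, hρ⟩⟩, rfl⟩

theorem card_add_two (n : ℕ) :
    Nat.card (NoncrossingMatching (n + 2)) =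
      ∑ j : Fin (n + 1),
        Nat.card (NoncrossingMatching j) * Nat.card (NoncrossingMatching (n - j)) := by
  rw [← Nat.card_eq_of_bijective _ (glueMap_bijective n), Nat.card_sigma]
  simp_rw [Nat.card_prod]

theorem card_zero : Nat.card (NoncrossingMatching 0) = 1 :=
  Nat.card_eq_one_iff_unique.2
    ⟨inferInstance, ⟨⟨id, fun _ => rfl, fun x => x.elim0, fun x => x.elim0⟩⟩⟩

theorem card_two_mul_add_one (m : ℕ) : Nat.card (NoncrossingMatching (2 * m + 1)) = 0 :=
  Nat.card_eq_zero.2 <| .inl ⟨fun f => by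
    simpa [Nat.even_add_one] using f.2.involutive.even_card_of_forall_ne f.2.ne_self⟩

theorem card_two_mul (m : ℕ) : Nat.card (NoncrossingMatching (2 * m)) = catalan m := by
  induction m using Nat.strong_induction_on with
  | _ m ih =>
    rcases m with _ | m
    · simpa using card_zero
    have hodd i : Nat.card (NoncrossingMatching (2 * i + 1)) *
        Nat.card (NoncrossingMatching (2 * m - (2 * i + 1))) = 0 := by
      rw [card_two_mul_add_one, zero_mul]
    calc Nat.card (NoncrossingMatching (2 * (m + 1)))
        = ∑ j ∈ range (2 * m + 1),
            Nat.card (NoncrossingMatching j) * Nat.card (NoncrossingMatching (2 * m - j)) := by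
          rw [mul_add_one, card_add_two, Fin.sum_univ_eq_sum_range (fun j =>
            Nat.card (NoncrossingMatching j) * Nat.card (NoncrossingMatching (2 * m - j)))]
      _ = ∑ i ∈ range (m + 1), Nat.card (NoncrossingMatching (2 * i)) *
            Nat.card (NoncrossingMatching (2 * (m - i))) := by
          rw [sum_range_two_mul_add_one_eq_of_odd_eq_zero hodd]
          exact sum_congr rfl fun i _ => by rw [Nat.mul_sub]
      _ = ∑ i ∈ range (m + 1), catalan i * catalan (m - i) :=
          sum_congr rfl fun i hi => by rw [ih i (by simp at hi; omega), ih (m - i) (by omega)]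
      _ = catalan (m + 1) := by
          rw [catalan_succ, Fin.sum_univ_eq_sum_range (fun i => catalan i * catalan (m - i))]

end NoncrossingMatching

/-- The number of fixed-point-free involutions `σ` of
`{1,…,2m}` with `C_σ = 0` is the `m`-th Catalan number. -/
theorem card_fpf_involutions (m : ℕ) :
    Nat.card {σ : Equiv.Perm (Fin (2*m)) //
        (∀ i, σ (σ i) = i) ∧ (∀ i, σ i ≠ i) ∧ Ccnt σ = 0}
      = catalan m := by
  rw [Nat.card_congr (NoncrossingMatching.permSubtypeEquiv (2 * m)),
    NoncrossingMatching.card_two_mul]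
end

section
/- For every integer n ≥ 1, Σ_{i=0}^{n−1} 2·(2i+1)·Cat(i)·Cat(n−i) = n·Cat(n+1). -/
/-!
Put `T = ∑_{i ≤ n} 2(2i+1) Cat(i) Cat(n-i)`. The weights `Cat(i) Cat(n-i)` are invariant under
`i ↦ n - i`, so Gauss' pairing replaces `i` by `n/2` on average, and Segner's recurrence gives
`T = 2(n+1) ∑_{i ≤ n} Cat(i) Cat(n-i) = 2(n+1) Cat(n+1)`. The last term of `T` is
`2(2n+1) Cat(n) = (n+2) Cat(n+1)`, and removing it leaves `n Cat(n+1)`.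
-/

open Finset

theorem two_mul_sum_range_succ_mul_of_symm {R : Type*} [CommSemiring R] (n : ℕ) (g : ℕ → R)
    (hg : ∀ i ≤ n, g (n - i) = g i) :
    2 * ∑ i ∈ range (n + 1), (i : R) * g i = n * ∑ i ∈ range (n + 1), g i := by
  have reflect : ∑ i ∈ range (n + 1), (i : R) * g i = ∑ i ∈ range (n + 1), ((n - i : ℕ) : R) * g i := by
    rw [← sum_range_reflect]
    refine sum_congr rfl fun i hi => ?_
    have hi : i ≤ n := Nat.lt_succ_iff.mp (mem_range.mp hi)
    rw [Nat.add_sub_cancel, hg i hi]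
  calc 2 * ∑ i ∈ range (n + 1), (i : R) * g i
      = ∑ i ∈ range (n + 1), ((i : R) + ((n - i : ℕ) : R)) * g i := by
        rw [two_mul]
        nth_rewrite 2 [reflect]
        simp only [← sum_add_distrib, add_mul]
    _ = n * ∑ i ∈ range (n + 1), g i := by
        rw [mul_sum]
        refine sum_congr rfl fun i hi => ?_
        rw [← Nat.cast_add, Nat.add_sub_cancel' (Nat.lt_succ_iff.mp (mem_range.mp hi))]

theorem sum_range_succ_catalan_mul_catalan_sub (n : ℕ) :
    ∑ i ∈ range (n + 1), catalan i * catalan (n - i) = catalan (n + 1) := by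
  rw [catalan_succ', Nat.sum_antidiagonal_eq_sum_range_succ (fun i j => catalan i * catalan j)]

theorem add_two_mul_catalan_succ (n : ℕ) :
    (n + 2) * catalan (n + 1) = 2 * (2 * n + 1) * catalan n := by
  apply Nat.eq_of_mul_eq_mul_left n.succ_pos
  calc (n + 1) * ((n + 2) * catalan (n + 1)) = (n + 1) * Nat.centralBinom (n + 1) := by
        rw [← succ_mul_catalan_eq_centralBinom]
    _ = 2 * (2 * n + 1) * Nat.centralBinom n := Nat.succ_mul_centralBinom_succ n
    _ = (n + 1) * (2 * (2 * n + 1) * catalan n) := by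
        rw [← succ_mul_catalan_eq_centralBinom]; ring

theorem sum_range_succ_weighted_catalan_mul_catalan_sub (n : ℕ) :
    ∑ i ∈ range (n + 1), 2 * (2 * i + 1) * catalan i * catalan (n - i)
      = 2 * (n + 1) * catalan (n + 1) := by
  have gauss := two_mul_sum_range_succ_mul_of_symm n (fun i => catalan i * catalan (n - i))
    fun i hi => by simp only [Nat.sub_sub_self hi, mul_comm]
  push_cast at gauss
  rw [← sum_range_succ_catalan_mul_catalan_sub]
  calc ∑ i ∈ range (n + 1), 2 * (2 * i + 1) * catalan i * catalan (n - i)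
      = 2 * (2 * ∑ i ∈ range (n + 1), i * (catalan i * catalan (n - i)))
          + 2 * ∑ i ∈ range (n + 1), catalan i * catalan (n - i) := by
        simp only [mul_sum, ← sum_add_distrib]
        exact sum_congr rfl fun i _ => by ring
    _ = 2 * (n + 1) * ∑ i ∈ range (n + 1), catalan i * catalan (n - i) := by
        rw [gauss]; ring

theorem catalan_sum_identity_general (n : ℕ) :
    ∑ i ∈ Finset.range n, 2 * (2*i+1) * catalan i * catalan (n - i)
      = n * catalan (n+1) := by
  have total := sum_range_succ_weighted_catalan_mul_catalan_sub n
  rw [sum_range_succ, Nat.sub_self, catalan_zero, mul_one, ← add_two_mul_catalan_succ] at total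
  linarith

/-- `Σ_{i=0}^{n−1} 2(2i+1)·Cat(i)·Cat(n−i) = n·Cat(n+1)`. -/
theorem catalan_sum_identity (n : ℕ) (hn : 1 ≤ n) :
    ∑ i ∈ Finset.range n, 2 * (2*i+1) * catalan i * catalan (n - i)
      = n * catalan (n+1) :=
  catalan_sum_identity_general n
end

section
/- For every positive integer g and every permutation σ of {1,…,g}, writing a_i = σ(i): (i) #{(i,j) ∈ {1,…,g}² : i ≤ j < a_i and a_j > j} = #{(i,j) ∈ {1,…,g}² : a_i < a_j ≤ i and a_j > j}; and (ii) #{(i,j) ∈ {1,…,g}² : i ≤ j < a_i and a_j ≤ j} = #{(i,j) ∈ {1,…,g}² : a_i < a_j ≤ i and a_j ≤ j}. -/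
/-!
Let `c k` count the `i < k` with `k ≤ σ i`, the arcs `i ↦ σ i` crossing the cut before `k` from
left to right; since `σ` permutes the `i` with `i < k` and `σ i < k`, as many arcs cross it from
right to left. Counting pairs by their second coordinate `j`, both sides of (i) and (ii) become
sums over `j` with `j < σ j`, resp. `σ j ≤ j`: of `c (j + 1)` on the left, of `c (σ j)` on the
right. Along `k`, the height `c` is a closed path that goes up at `k < σ k` and down at
`σ⁻¹ k < k`, and (i) says that the heights after the up steps and before the down steps have
equal sums. For (ii) it remains that `∑ c (j + 1) = ∑ c j`, as `c 0 = c g = 0`.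
-/

open Finset

theorem sum_fin_succ_sub_eq_zero_of_eq {G : Type*} [AddCommGroup G] {n : ℕ} (f : ℕ → G)
    (hf : f n = f 0) : ∑ k : Fin n, (f (k + 1) - f k) = 0 := by
  rw [Fin.sum_univ_eq_sum_range (fun k => f (k + 1) - f k), sum_range_sub, hf, sub_self]

theorem sum_filter_succ_eq_sum_filter_of_step {n : ℕ} (f : ℕ → ℤ) (hf : f n = f 0)
    (up down : Fin n → Prop) [DecidablePred up] [DecidablePred down]
    (hstep : ∀ k : Fin n,
      f (k + 1) = f k + (if up k then 1 else 0) - (if down k then 1 else 0)) :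
    ∑ k with up k, f (k + 1) = ∑ k with down k, f k := by
  -- `2 (up·f(k+1) - down·f(k)) = Δ(f²) + Δf`, and both differences telescope to zero.
  have hpoint : ∀ k : Fin n,
      2 * ((if up k then f (k + 1) else 0) - (if down k then f k else 0))
        = (f (k + 1) ^ 2 - f k ^ 2) + (f (k + 1) - f k) := by
    intro k
    rw [hstep k]
    split_ifs <;> ring
  have hsum := sum_congr rfl fun k (_ : k ∈ univ) => hpoint k
  rw [← mul_sum, sum_add_distrib, sum_fin_succ_sub_eq_zero_of_eq (fun k => f k ^ 2) (by rw [hf]),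
    sum_fin_succ_sub_eq_zero_of_eq f hf, sum_sub_distrib, ← sum_filter, ← sum_filter] at hsum
  linarith

theorem card_filter_prod_and_snd {α β : Type*} [Fintype α] [Fintype β] (P : α → β → Prop)
    (Q : β → Prop) [∀ a b, Decidable (P a b)] [DecidablePred Q] :
    #{p : α × β | P p.1 p.2 ∧ Q p.2} = ∑ b with Q b, #{a | P a b} := by
  rw [card_filter, Fintype.sum_prod_type_right, sum_filter]
  refine sum_congr rfl fun b _ => ?_
  split_ifs with hb <;> simp [hb]

namespace Equiv.Perm

variable {n : ℕ} (σ : Perm (Fin n))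

def crossings (k : ℕ) : ℕ := #{i : Fin n | (i : ℕ) < k ∧ k ≤ (σ i : ℕ)}

theorem crossings_zero : σ.crossings 0 = 0 := by simp [crossings]

theorem crossings_eq_zero_of_le {k : ℕ} (hk : n ≤ k) : σ.crossings k = 0 := by
  simp only [crossings, card_eq_zero, filter_eq_empty_iff, mem_univ, true_implies, not_and,
    not_le]
  exact fun i _ => (σ i).is_lt.trans_le hk

theorem card_filter_le_lt_eq_crossings_succ (j : Fin n) :
    #{i | i ≤ j ∧ j < σ i} = σ.crossings (j + 1) := by
  simp only [crossings, Fin.le_def, Fin.lt_def, Nat.lt_succ_iff, Nat.succ_le_iff]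

theorem card_filter_lt_le_eq_crossings (k : Fin n) :
    #{i | σ i < k ∧ k ≤ i} = σ.crossings k := by
  have hcard : #{i | σ i < k} = #{i | i < k} := by
    simp only [card_filter]
    exact Equiv.sum_comp σ fun m => if m < k then 1 else 0
  have hσ := card_filter_add_card_filter_not (s := {i | σ i < k}) fun i => k ≤ i
  have hid := card_filter_add_card_filter_not (s := {i | i < k}) fun i => k ≤ σ i
  have hboth : #{i | σ i < k ∧ i < k} = #{i | i < k ∧ σ i < k} := by
    simp only [and_comm]
  simp only [filter_filter, not_le] at hσ hid
  simp only [crossings, ← Fin.lt_def, ← Fin.le_def]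
  omega

theorem crossings_succ_add (k : Fin n) :
    σ.crossings (k + 1) + (if σ.symm k < k then 1 else 0)
      = σ.crossings k + (if k < σ k then 1 else 0) := by
  have hdown : (if σ.symm k < k then 1 else 0) = ∑ i, if σ i = k ∧ i < k then 1 else 0 := by
    rw [← Equiv.sum_comp σ.symm]
    simp [ite_and]
  have hup : (if k < σ k then 1 else 0) = ∑ i, if i = k ∧ k < σ i then 1 else 0 := by
    simp [ite_and]
  rw [hdown, hup, crossings, crossings, card_filter, card_filter, ← sum_add_distrib,
    ← sum_add_distrib]
  refine sum_congr rfl fun i _ => ?_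
  simp only [Fin.ext_iff, Fin.lt_def]
  split_ifs <;> omega

theorem sum_crossings_succ_eq_sum_crossings_apply :
    ∑ j : Fin n, σ.crossings (j + 1) = ∑ j, σ.crossings (σ j) := by
  have h := sum_fin_succ_sub_eq_zero_of_eq (n := n) (fun k => (σ.crossings k : ℤ))
    (by simp [crossings_eq_zero_of_le, crossings_zero])
  rw [sum_sub_distrib, sub_eq_zero] at h
  rw [Equiv.sum_comp σ (fun j => σ.crossings j)]
  exact_mod_cast h

theorem sum_filter_crossings_succ_eq :
    ∑ j with j < σ j, σ.crossings (j + 1) = ∑ j with j < σ j, σ.crossings (σ j) := by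
  have h := sum_filter_succ_eq_sum_filter_of_step (fun k => (σ.crossings k : ℤ))
    (by simp [crossings_eq_zero_of_le, crossings_zero]) (fun k => k < σ k) (fun k => σ.symm k < k)
    fun k => by
      have := σ.crossings_succ_add k
      split_ifs at this ⊢ <;> omega
  have hreindex : ∑ k with σ.symm k < k, (σ.crossings k : ℤ)
      = ∑ j with j < σ j, (σ.crossings (σ j) : ℤ) := by
    rw [sum_filter, sum_filter, ← Equiv.sum_comp σ]
    simp
  exact_mod_cast h.trans hreindex

theorem sum_filter_le_crossings_succ_eq :
    ∑ j with σ j ≤ j, σ.crossings (j + 1) = ∑ j with σ j ≤ j, σ.crossings (σ j) := by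
  have hsplit (f : Fin n → ℕ) := sum_filter_add_sum_filter_not univ (fun j => j < σ j) f
  simp only [not_lt] at hsplit
  have hsucc := hsplit fun j => σ.crossings (j + 1)
  have happly := hsplit fun j => σ.crossings (σ j)
  have htotal := σ.sum_crossings_succ_eq_sum_crossings_apply
  have hup := σ.sum_filter_crossings_succ_eq
  omega

end Equiv.Perm

theorem clarke_lemma_general (g : ℕ) (σ : Equiv.Perm (Fin g)) :
    (Finset.univ.filter (fun p : Fin g × Fin g =>
        p.1 ≤ p.2 ∧ p.2 < σ p.1 ∧ p.2 < σ p.2)).card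
      = (Finset.univ.filter (fun p : Fin g × Fin g =>
        σ p.1 < σ p.2 ∧ σ p.2 ≤ p.1 ∧ p.2 < σ p.2)).card
    ∧
    (Finset.univ.filter (fun p : Fin g × Fin g =>
        p.1 ≤ p.2 ∧ p.2 < σ p.1 ∧ σ p.2 ≤ p.2)).card
      = (Finset.univ.filter (fun p : Fin g × Fin g =>
        σ p.1 < σ p.2 ∧ σ p.2 ≤ p.1 ∧ σ p.2 ≤ p.2)).card := by
  simp only [← and_assoc]
  rw [card_filter_prod_and_snd (fun i j => i ≤ j ∧ j < σ i) (fun j => j < σ j),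
    card_filter_prod_and_snd (fun i j => σ i < σ j ∧ σ j ≤ i) (fun j => j < σ j),
    card_filter_prod_and_snd (fun i j => i ≤ j ∧ j < σ i) (fun j => σ j ≤ j),
    card_filter_prod_and_snd (fun i j => σ i < σ j ∧ σ j ≤ i) (fun j => σ j ≤ j)]
  simp only [σ.card_filter_le_lt_eq_crossings_succ, σ.card_filter_lt_le_eq_crossings]
  exact ⟨σ.sum_filter_crossings_succ_eq, σ.sum_filter_le_crossings_succ_eq⟩

/-- (Clarke's lemma) For a permutation `σ` of `{1,…,g}`,
writing `a_i = σ(i)`: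
(i) `#{(i,j) : i ≤ j < a_i, a_j > j} = #{(i,j) : a_i < a_j ≤ i, a_j > j}`;
(ii) `#{(i,j) : i ≤ j < a_i, a_j ≤ j} = #{(i,j) : a_i < a_j ≤ i, a_j ≤ j}`. -/
theorem clarke_lemma (g : ℕ) (hg : 1 ≤ g) (σ : Equiv.Perm (Fin g)) :
    (Finset.univ.filter (fun p : Fin g × Fin g =>
        p.1 ≤ p.2 ∧ p.2 < σ p.1 ∧ p.2 < σ p.2)).card
      = (Finset.univ.filter (fun p : Fin g × Fin g =>
        σ p.1 < σ p.2 ∧ σ p.2 ≤ p.1 ∧ p.2 < σ p.2)).card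
    ∧
    (Finset.univ.filter (fun p : Fin g × Fin g =>
        p.1 ≤ p.2 ∧ p.2 < σ p.1 ∧ σ p.2 ≤ p.2)).card
      = (Finset.univ.filter (fun p : Fin g × Fin g =>
        σ p.1 < σ p.2 ∧ σ p.2 ≤ p.1 ∧ σ p.2 ≤ p.2)).card :=
  clarke_lemma_general g σ
end

section
/- For every permutation σ of {1,…,g}: 2·ℓ(σ) = 4·(A_σ + A_{σ⁻¹} + B_σ) + #{i ∈ {1,…,g} : σ(i) ≠ i} if and only if σ∘σ = id and C_σ = 0. -/
/-!
Let `D_σ = #{i : i < σ i < σ (σ i)}` count double ascents. Then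
`2ℓ(σ) = 4(A_σ + A_{σ⁻¹} + B_σ) + #{i : σ i ≠ i} + 2(C_σ + C_{σ⁻¹}) + D_σ + D_{σ⁻¹}`.
Every term is a sum over ordered pairs `(i, j)` of a function of the order pattern of
`i, j, σ i, σ j`, and the identity becomes a pointwise one after adding, for each `i`, the vanishing
sum `∑ j, ±([σ j < m] + [σ j ≤ m] - [j < m] - [j ≤ m])` with `m = min i (σ i)`: every level is
crossed by as many arcs `j ↦ σ j` to the right as to the left.

So equality holds iff `σ` and `σ⁻¹` have no crossing ascending arcs and no double ascents.
For an involution `σ⁻¹ = σ` and this reduces to `C_σ = 0`. Conversely, a shortest ascending arc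
`i ↦ σ i` of `σ` or `σ⁻¹` with `σ (σ i) ≠ i` is followed by a descent, and those conditions force a
strictly shorter such arc inside `[i, σ i]`.
-/

open Finset

/-- `#{i : i < σ i < σ (σ i)}`, each such `i` being recorded as the pair `(i, σ i)`. -/
def doubleAscentCnt {n : ℕ} (σ : Equiv.Perm (Fin n)) : ℕ :=
  (univ.filter fun p : Fin n × Fin n => p.1 < p.2 ∧ σ p.1 = p.2 ∧ p.2 < σ p.2).card

section Sums

variable {α : Type*} [Fintype α]

theorem natCast_card_filter_prod (P : α × α → Prop) [DecidablePred P] :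
    ((univ.filter P).card : ℤ) = ∑ i, ∑ j, if P (i, j) then 1 else 0 := by
  rw [card_filter]
  push_cast
  exact Fintype.sum_prod_type _

theorem sum_sum_perm_comp {M : Type*} [AddCommMonoid M] (σ : Equiv.Perm α) (f : α → α → M) :
    ∑ a, ∑ b, f (σ a) (σ b) = ∑ i, ∑ j, f i j := by
  rw [Equiv.sum_comp σ fun i => ∑ b, f i (σ b)]
  exact sum_congr rfl fun i _ => Equiv.sum_comp σ (f i)

theorem sum_sum_eq_zero_of_add_swap {f : α → α → ℤ} (h : ∀ i j, f i j + f j i = 0) :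
    ∑ i, ∑ j, f i j = 0 := by
  have h2 : 2 * ∑ i, ∑ j, f i j = ∑ i, ∑ j, (f i j + f j i) := by
    rw [two_mul]
    nth_rw 2 [sum_comm]
    simp only [sum_add_distrib]
  simpa [h] using h2

end Sums

section PairTerms

variable {α : Type*} [LinearOrder α]

/-- The contribution of the ordered pair `(a, b)`, where `c = σ a` and `d = σ b`, to
`2ℓ - 4(A_σ + A_{σ⁻¹} + B_σ) - #{i : σ i ≠ i} - 2(C_σ + C_{σ⁻¹}) - D_σ - D_{σ⁻¹}`: the counts for
`σ⁻¹` are read through the substitution `(i, j) = (σ a, σ b)`, the support on the diagonal. -/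
def defectTerm (a b c d : α) : ℤ :=
  2 * (if a < b ∧ d < c then 1 else 0)
    - 4 * (if a < b ∧ b < d ∧ d < c then 1 else 0)
    - 4 * (if c < d ∧ d < b ∧ b < a then 1 else 0)
    - 4 * (if a < b ∧ d = b ∧ b < c then 1 else 0)
    - 2 * (if a < b ∧ b < c ∧ c < d then 1 else 0)
    - 2 * (if c < d ∧ d < a ∧ a < b then 1 else 0)
    - (if a < b ∧ c = b ∧ b < d then 1 else 0)
    - (if c < d ∧ a = d ∧ d < b then 1 else 0)
    - (if a = b ∧ c ≠ a then 1 else 0)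

def levelTerm (m x : α) : ℤ := (if x < m then 1 else 0) + (if x ≤ m then 1 else 0)

def balanceTerm (a b c d : α) : ℤ :=
  (if a ≤ c then 1 else -1) * (levelTerm (min a c) d - levelTerm (min a c) b)

/-- Only the order pattern of `a, b, c, d` matters, so this is a finite check. -/
theorem defectTerm_add_defectTerm {a b c d : α} (h : a = b ↔ c = d) :
    defectTerm a b c d + defectTerm b a d c = balanceTerm a b c d + balanceTerm b a d c := by
  unfold defectTerm balanceTerm levelTerm
  grind

variable [Fintype α]

theorem sum_balanceTerm (σ : Equiv.Perm α) (a : α) : ∑ b, balanceTerm a b (σ a) (σ b) = 0 := by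
  simp only [balanceTerm, ← mul_sum, sum_sub_distrib, Equiv.sum_comp σ (levelTerm _), sub_self,
    mul_zero]

theorem sum_sum_defectTerm (σ : Equiv.Perm α) :
    ∑ a, ∑ b, defectTerm a b (σ a) (σ b) = 0 := by
  have hbal : ∑ a, ∑ b, (defectTerm a b (σ a) (σ b) - balanceTerm a b (σ a) (σ b)) = 0 :=
    sum_sum_eq_zero_of_add_swap fun a b => by
      linarith [defectTerm_add_defectTerm (σ.injective.eq_iff (a := a) (b := b)).symm]
  simpa [sum_sub_distrib, sum_balanceTerm] using hbal

end PairTerms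

theorem two_mul_invCnt_eq {n : ℕ} (σ : Equiv.Perm (Fin n)) :
    2 * invCnt σ = 4 * (Acnt σ + Acnt σ⁻¹ + Bcnt σ) + (univ.filter fun i => σ i ≠ i).card
      + 2 * (Ccnt σ + Ccnt σ⁻¹) + doubleAscentCnt σ + doubleAscentCnt σ⁻¹ := by
  have key := sum_sum_defectTerm σ
  simp only [defectTerm, sum_sub_distrib, ← mul_sum] at key
  have hAinv : (Acnt σ⁻¹ : ℤ) = ∑ a, ∑ b, if σ a < σ b ∧ σ b < b ∧ b < a then 1 else 0 := by
    rw [Acnt, natCast_card_filter_prod, ← sum_sum_perm_comp σ]; simp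
  have hCinv : (Ccnt σ⁻¹ : ℤ) = ∑ a, ∑ b, if σ a < σ b ∧ σ b < a ∧ a < b then 1 else 0 := by
    rw [Ccnt, natCast_card_filter_prod, ← sum_sum_perm_comp σ]; simp
  have hDinv : (doubleAscentCnt σ⁻¹ : ℤ) =
      ∑ a, ∑ b, if σ a < σ b ∧ a = σ b ∧ σ b < b then 1 else 0 := by
    rw [doubleAscentCnt, natCast_card_filter_prod, ← sum_sum_perm_comp σ]; simp
  have hsupp : ((univ.filter fun i => σ i ≠ i).card : ℤ) =
      ∑ a, ∑ b, if a = b ∧ σ a ≠ a then 1 else 0 := by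
    simp only [card_filter, ite_and, sum_ite_eq, mem_univ, if_true]
    push_cast
    rfl
  zify
  rw [hAinv, hCinv, hDinv, hsupp]
  simp only [invCnt, Acnt, Bcnt, Ccnt, doubleAscentCnt, natCast_card_filter_prod]
  linarith

section Involution

variable {n : ℕ}

theorem Ccnt_eq_zero_iff (σ : Equiv.Perm (Fin n)) :
    Ccnt σ = 0 ↔ ∀ i j, i < j → j < σ i → ¬ σ i < σ j := by
  simp [Ccnt]

theorem doubleAscentCnt_eq_zero_iff (σ : Equiv.Perm (Fin n)) :
    doubleAscentCnt σ = 0 ↔ ∀ i, i < σ i → ¬ σ i < σ (σ i) := by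
  simp only [doubleAscentCnt, card_filter_eq_zero_iff, mem_univ, true_implies, Prod.forall,
    not_and]
  exact ⟨fun h i hi => h i (σ i) hi rfl, fun h i j hij hσ => by subst hσ; exact h i hij⟩

/-- Induction on the length of the arc `i ↦ τ i`, switching to `τ⁻¹` when the shorter arc found
inside `[i, τ i]` is a descending one. -/
theorem apply_apply_eq_self_of_lt (τ : Equiv.Perm (Fin n))
    (hC : Ccnt τ = 0) (hC' : Ccnt τ⁻¹ = 0)
    (hD : doubleAscentCnt τ = 0) (hD' : doubleAscentCnt τ⁻¹ = 0)
    (i : Fin n) (hi : i < τ i) : τ (τ i) = i := by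
  have cross := (Ccnt_eq_zero_iff τ).1 hC
  have cross' := (Ccnt_eq_zero_iff τ⁻¹).1 hC'
  have asc := (doubleAscentCnt_eq_zero_iff τ).1 hD
  have asc' := (doubleAscentCnt_eq_zero_iff τ⁻¹).1 hD'
  have inv_self (x : Fin n) : τ⁻¹ (τ x) = x := τ.symm_apply_apply x
  have self_inv (x : Fin n) : τ (τ⁻¹ x) = x := τ.apply_symm_apply x
  by_contra hne
  have hdesc : τ (τ i) < τ i :=
    lt_of_le_of_ne (not_lt.1 (asc i hi)) fun h => hi.ne' (τ.injective h)
  rcases lt_or_gt_of_ne hne with hwi | hiw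
  · have hpre : i < τ⁻¹ i := by
      refine lt_of_le_of_ne (not_lt.1 fun hui => ?_) fun h => ?_
      · exact asc _ (by rwa [self_inv]) (by rwa [self_inv])
      · exact hi.ne' ((congrArg τ h).trans (self_inv i))
    have hpre' : τ⁻¹ i < τ i := by
      refine lt_of_le_of_ne (not_lt.1 fun hpu => ?_) fun h => ?_
      · exact cross' _ _ hwi (by rwa [inv_self]) (by rwa [inv_self])
      · exact hne (by rw [← h, self_inv])
    have := apply_apply_eq_self_of_lt τ⁻¹ hC' (by rwa [inv_inv]) hD' (by rwa [inv_inv]) i hpre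
    exact hpre'.ne ((self_inv _).symm.trans (congrArg τ this))
  · have hnext : τ (τ i) < τ (τ (τ i)) := by
      refine lt_of_le_of_ne (not_lt.1 fun h => ?_) fun h => ?_
      · exact asc' _ (by rwa [inv_self]) (by rwa [inv_self, inv_self])
      · exact hdesc.ne (τ.injective h.symm)
    have hnext_lt : τ (τ (τ i)) < τ i := by
      refine lt_of_le_of_ne (not_lt.1 (cross i _ hiw hdesc)) fun h => ?_
      exact hne (τ.injective h)
    have := apply_apply_eq_self_of_lt τ hC hC' hD hD' _ hnext
    exact hnext_lt.ne (τ.injective this)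
termination_by (τ i : ℕ) - i
decreasing_by all_goals omega

theorem involutive_and_Ccnt_eq_zero_iff (σ : Equiv.Perm (Fin n)) :
    (∀ i, σ (σ i) = i) ∧ Ccnt σ = 0 ↔
      Ccnt σ = 0 ∧ Ccnt σ⁻¹ = 0 ∧ doubleAscentCnt σ = 0 ∧ doubleAscentCnt σ⁻¹ = 0 := by
  constructor
  · rintro ⟨hσ, hC⟩
    have hinv : σ⁻¹ = σ := inv_eq_of_mul_eq_one_right (Equiv.ext hσ)
    have hD : doubleAscentCnt σ = 0 :=
      (doubleAscentCnt_eq_zero_iff σ).2 fun i hi hlt => lt_asymm hi (by rwa [hσ] at hlt)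
    rw [hinv]
    exact ⟨hC, hC, hD, hD⟩
  · rintro ⟨hC, hC', hD, hD'⟩
    refine ⟨fun i => ?_, hC⟩
    rcases lt_trichotomy i (σ i) with h | h | h
    · exact apply_apply_eq_self_of_lt σ hC hC' hD hD' i h
    · rw [← h, ← h]
    · have := apply_apply_eq_self_of_lt σ⁻¹ hC' (by rwa [inv_inv]) hD' (by rwa [inv_inv]) (σ i)
        (by simpa using h)
      exact ((Equiv.symm_apply_eq σ).1 (by simpa using this)).symm

end Involution

/-- `2ℓ(σ) = 4(A_σ + A_{σ⁻¹} + B_σ) + #{i : σ(i) ≠ i}` iff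
`σ` is an involution with `C_σ = 0`. -/
theorem eq_iff_involution (g : ℕ) (σ : Equiv.Perm (Fin g)) :
    2 * invCnt σ = 4 * (Acnt σ + Acnt σ⁻¹ + Bcnt σ)
        + (Finset.univ.filter (fun i : Fin g => σ i ≠ i)).card
      ↔ ((∀ i, σ (σ i) = i) ∧ Ccnt σ = 0) := by
  rw [two_mul_invCnt_eq, involutive_and_Ccnt_eq_zero_iff]
  omega
end

section
/- For every permutation σ of {1,…,g}: 2·ℓ(σ) = 4·(A_σ + A_{σ⁻¹} + B_σ) + #{i ∈ {1,…,g} : σ(i) ≠ i} + 1 if and only if C_σ = 0, C_{σ⁻¹} = 0, and the cycle decomposition of σ consists of fixed points, transpositions, and exactly one cycle of length 3. -/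
/-!
Sorting the inversions of `σ` by the directions of their two arcs `i ↦ σ i` and counting the arcs
that pass over each point gives `ℓ(σ) = 2 (A_σ + A_{σ⁻¹} + B_σ) + C_σ + C_{σ⁻¹} + W`, where
`W = #(lowPoints σ)` counts the points lying below one of their cycle neighbours `σ t`, `σ⁻¹ t`.
The moved points are these together with the peaks (`σ t < t > σ⁻¹ t`), and there are at most `W`
peaks, so the identity holds iff `C_σ = C_{σ⁻¹} = 0` and `W` exceeds the number of peaks by one.

`C_σ = 0` says that no two rising arcs cross, `C_{σ⁻¹} = 0` that no two falling arcs cross.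
Together they force every peak to be the maximum of its cycle, so the peaks are in bijection with
the nontrivial cycles. The condition on `W` then says that the cycle lengths, all at least `2`, sum
to twice the number of cycles plus one.
-/

open Finset Equiv

section Fiber
variable {α : Type*} [Fintype α]

lemma card_filter_prod_eq_sum_filter_fst (c : α → Prop) [DecidablePred c]
    (P : α × α → Prop) [DecidablePred P] :
    #{p | c p.1 ∧ P p} = ∑ s with c s, #{j | P (s, j)} := by
  rw [sum_filter, card_filter, Fintype.sum_prod_type]
  refine sum_congr rfl fun s _ => ?_
  split_ifs with h <;>
    simp only [h, true_and, false_and, card_filter, if_false, sum_const_zero]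

lemma card_filter_prod_eq_sum_filter_snd (c : α → Prop) [DecidablePred c]
    (P : α × α → Prop) [DecidablePred P] :
    #{p | c p.2 ∧ P p} = ∑ t with c t, #{i | P (i, t)} := by
  rw [sum_filter, card_filter, Fintype.sum_prod_type_right]
  refine sum_congr rfl fun t _ => ?_
  split_ifs with h <;>
    simp only [h, true_and, false_and, card_filter, if_false, sum_const_zero]

end Fiber

lemma Int.exists_lt_le_add_one {α : Type*} [LinearOrder α] {w : ℤ → α} {c : α} {i j : ℤ}
    (hij : i ≤ j) (hi : w i < c) (hj : c ≤ w j) :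
    ∃ k, i ≤ k ∧ k < j ∧ w k < c ∧ c ≤ w (k + 1) := by
  induction j, hij using Int.leInduction with
  | base => exact absurd hj hi.not_ge
  | succ j hij ih =>
    by_cases h : c ≤ w j
    · obtain ⟨k, hik, hkj, hk⟩ := ih h
      exact ⟨k, hik, by omega, hk⟩
    · exact ⟨j, hij, by omega, not_le.mp h, hj⟩

lemma Multiset.exists_eq_cons_replicate_of_sum_eq {m : Multiset ℕ} (h2 : ∀ a ∈ m, 2 ≤ a)
    (hsum : m.sum = 2 * card m + 1) : ∃ k, m = 3 ::ₘ replicate k 2 := by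
  have hbound : ∀ s : Multiset ℕ, (∀ a ∈ s, 2 ≤ a) → ∀ b ∈ s,
      b + 2 * card s ≤ s.sum + 2 := by
    intro s hs b hb
    obtain ⟨t, rfl⟩ := exists_cons_of_mem hb
    have := card_nsmul_le_sum (s := t) (a := 2) fun x hx => hs x (mem_cons_of_mem hx)
    simp only [smul_eq_mul, sum_cons, card_cons] at this ⊢
    omega
  obtain ⟨a, ha, ha2⟩ : ∃ a ∈ m, a ≠ 2 := by
    by_contra! hall
    rw [eq_replicate_card.mpr hall, sum_replicate, card_replicate, smul_eq_mul] at hsum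
    omega
  have ha3 : a = 3 := by
    have := hbound m h2 a ha
    have := h2 a ha
    omega
  subst ha3
  obtain ⟨s, rfl⟩ := exists_cons_of_mem ha
  refine ⟨card s, congrArg _ (eq_replicate_card.mpr fun b hb => ?_)⟩
  have := hbound s (fun x hx => h2 x (mem_cons_of_mem hx)) b hb
  have := h2 b (mem_cons_of_mem hb)
  simp only [sum_cons, card_cons] at hsum
  omega

section Arcs
variable {g : ℕ} (σ : Perm (Fin g))

def risingOver (t : Fin g) : ℕ := #{i | i < t ∧ t < σ i}

def crossUp (t : Fin g) : ℕ := #{i | i ≤ t ∧ t < σ i}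

def peaks : Finset (Fin g) := {t | σ t < t ∧ σ⁻¹ t < t}

def lowPoints : Finset (Fin g) := {t | t < σ t ∨ t < σ⁻¹ t}

lemma crossUp_eq (t : Fin g) : crossUp σ t = risingOver σ t + if t < σ t then 1 else 0 := by
  split_ifs with h
  · rw [crossUp, risingOver,
      ← card_insert_of_notMem (s := {i | i < t ∧ t < σ i}) (a := t) (by simp)]
    congr 1
    ext i
    simp only [mem_filter, mem_univ, true_and, mem_insert]
    grind
  · rw [crossUp, risingOver, add_zero]
    congr 1
    ext i
    simp only [mem_filter, mem_univ, true_and]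
    grind

/-- The arcs of `σ⁻¹` crossing the gap above `t` upwards are those of `σ` crossing it downwards,
and a permutation crosses every gap as often downwards as upwards. -/
lemma crossUp_inv (t : Fin g) : crossUp σ⁻¹ t = crossUp σ t := by
  have hdown : crossUp σ⁻¹ t = #{j | σ j ≤ t ∧ t < j} :=
    card_equiv σ.symm fun i => by simp [Perm.inv_def, and_comm]
  have hperm : #{i | i ≤ t} = #{j | σ j ≤ t} := card_equiv σ.symm (by simp)
  have hleft := card_filter_add_card_filter_not (s := {i | i ≤ t}) fun i => t < σ i
  have hright := card_filter_add_card_filter_not (s := {j | σ j ≤ t}) fun j => t < j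
  simp only [filter_filter, not_lt] at hleft hright
  have hboth : #{j | σ j ≤ t ∧ j ≤ t} = #{i | i ≤ t ∧ σ i ≤ t} := by
    simp only [and_comm]
  rw [hdown, crossUp]
  omega

lemma Acnt_add_Ccnt : Acnt σ + Ccnt σ = ∑ t with t < σ t, risingOver σ t :=
  calc Acnt σ + Ccnt σ
      = #{p : Fin g × Fin g | p.2 < σ p.2 ∧ (p.1 < p.2 ∧ p.2 < σ p.1)} := by
        rw [Acnt, Ccnt, card_filter, card_filter, card_filter, ← sum_add_distrib]
        refine sum_congr rfl fun p _ => ?_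
        have : p.1 ≠ p.2 → σ p.1 ≠ σ p.2 := σ.injective.ne
        split_ifs <;> omega
    _ = _ :=
        card_filter_prod_eq_sum_filter_snd (fun t => t < σ t) fun p => p.1 < p.2 ∧ p.2 < σ p.1

lemma Bcnt_eq_sum : Bcnt σ = ∑ t with σ t = t, risingOver σ t :=
  calc Bcnt σ = #{p : Fin g × Fin g | σ p.2 = p.2 ∧ (p.1 < p.2 ∧ p.2 < σ p.1)} := by
        simp only [Bcnt, and_left_comm]
    _ = _ :=
        card_filter_prod_eq_sum_filter_snd (fun t => σ t = t) fun p => p.1 < p.2 ∧ p.2 < σ p.1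

lemma card_inversions_of_le_right :
    #{p : Fin g × Fin g | p.1 < p.2 ∧ σ p.2 < σ p.1 ∧ p.2 ≤ σ p.2} = Acnt σ + Bcnt σ := by
  rw [Acnt, Bcnt, card_filter, card_filter, card_filter, ← sum_add_distrib]
  refine sum_congr rfl fun p _ => ?_
  split_ifs <;> omega

lemma invCnt_eq_add : invCnt σ = (Acnt σ + Bcnt σ) + (Acnt σ⁻¹ + Bcnt σ⁻¹)
    + #{p : Fin g × Fin g | p.1 < p.2 ∧ σ p.2 < σ p.1 ∧ σ p.2 < p.2 ∧ p.1 < σ p.1} := by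
  have hswap : #{p : Fin g × Fin g | p.1 < p.2 ∧ σ⁻¹ p.2 < σ⁻¹ p.1 ∧ p.2 ≤ σ⁻¹ p.2}
      = #{p : Fin g × Fin g | p.1 < p.2 ∧ σ p.2 < σ p.1 ∧ σ p.1 ≤ p.1} :=
    card_equiv ((Equiv.prodComm _ _).trans (σ⁻¹.prodCongr σ⁻¹)) fun p => by simp; tauto
  rw [← card_inversions_of_le_right, ← card_inversions_of_le_right σ⁻¹, hswap, invCnt,
    card_filter, card_filter, card_filter, card_filter, ← sum_add_distrib, ← sum_add_distrib]
  refine sum_congr rfl fun p _ => ?_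
  split_ifs <;> omega

lemma card_inversions_rising_falling :
    #{p : Fin g × Fin g | p.1 < p.2 ∧ σ p.2 < σ p.1 ∧ σ p.2 < p.2 ∧ p.1 < σ p.1}
      = ∑ t with t < σ t, crossUp σ⁻¹ t + ∑ t with t < σ⁻¹ t, risingOver σ t := by
  have hre : #{p : Fin g × Fin g | p.1 < p.2 ∧ σ p.2 < σ p.1 ∧ σ p.2 < p.2 ∧ p.1 < σ p.1}
      = #{q : Fin g × Fin g | q.1 < σ⁻¹ q.2 ∧ q.2 < σ q.1 ∧ q.2 < σ⁻¹ q.2 ∧ q.1 < σ q.1} :=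
    card_equiv ((Equiv.refl _).prodCongr σ) fun p => by simp
  have hsplit :
      #{q : Fin g × Fin g | q.1 < σ⁻¹ q.2 ∧ q.2 < σ q.1 ∧ q.2 < σ⁻¹ q.2 ∧ q.1 < σ q.1}
        = #{q : Fin g × Fin g | q.1 < σ q.1 ∧ (q.2 ≤ q.1 ∧ q.1 < σ⁻¹ q.2)}
          + #{q : Fin g × Fin g | q.2 < σ⁻¹ q.2 ∧ (q.1 < q.2 ∧ q.2 < σ q.1)} := by
    rw [card_filter, card_filter, card_filter, ← sum_add_distrib]
    refine sum_congr rfl fun q _ => ?_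
    split_ifs <;> omega
  rw [hre, hsplit,
    card_filter_prod_eq_sum_filter_fst (fun s => s < σ s) fun q => q.2 ≤ q.1 ∧ q.1 < σ⁻¹ q.2,
    card_filter_prod_eq_sum_filter_snd (fun t => t < σ⁻¹ t) fun q => q.1 < q.2 ∧ q.2 < σ q.1]
  rfl

lemma invCnt_eq : invCnt σ = 2 * Acnt σ + 2 * Acnt σ⁻¹ + 2 * Bcnt σ + Ccnt σ + Ccnt σ⁻¹
    + #(lowPoints σ) := by
  have hsplit := invCnt_eq_add σ
  have hR := card_inversions_rising_falling σ
  have hAC := Acnt_add_Ccnt σ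
  have hAC' := Acnt_add_Ccnt σ⁻¹
  have hB := Bcnt_eq_sum σ
  have hB' := Bcnt_eq_sum σ⁻¹
  have hlow : #(lowPoints σ) = ∑ t, if t < σ t ∨ t < σ⁻¹ t then 1 else 0 :=
    card_filter _ _
  simp only [sum_filter] at hR hAC hAC' hB hB'
  have hpointwise : ∑ t, ((if σ⁻¹ t = t then risingOver σ⁻¹ t else 0)
        + (if t < σ t then crossUp σ⁻¹ t else 0) + (if t < σ⁻¹ t then risingOver σ t else 0))
      = ∑ t, ((if t < σ t then risingOver σ t else 0)
        + (if t < σ⁻¹ t then risingOver σ⁻¹ t else 0)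
        + (if σ t = t then risingOver σ t else 0)
        + if t < σ t ∨ t < σ⁻¹ t then 1 else 0) := by
    refine sum_congr rfl fun t _ => ?_
    have h1 := crossUp_eq σ t
    have h2 := crossUp_eq σ⁻¹ t
    have h3 := crossUp_inv σ t
    have h4 : σ⁻¹ t = t ↔ σ t = t := Perm.inv_eq_iff_eq.trans eq_comm
    split_ifs at h1 h2 ⊢ <;> omega
  simp only [sum_add_distrib] at hpointwise
  omega

lemma card_support_eq : #σ.support = #(lowPoints σ) + #(peaks σ) := by
  rw [Perm.support, lowPoints, peaks, card_filter, card_filter, card_filter, ← sum_add_distrib]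
  refine sum_congr rfl fun t _ => ?_
  have h : σ⁻¹ t = t ↔ σ t = t := Perm.inv_eq_iff_eq.trans eq_comm
  split_ifs <;> omega

lemma card_peaks_le : #(peaks σ) ≤ #(lowPoints σ) :=
  calc #(peaks σ)
      ≤ #{t | σ⁻¹ t < t} := card_le_card (monotone_filter_right _ fun _ _ h => h.2)
    _ = #{t | t < σ t} := (card_equiv σ fun t => by simp).symm
    _ ≤ #(lowPoints σ) := card_le_card (monotone_filter_right _ fun _ _ h => Or.inl h)

lemma false_of_Ccnt_eq_zero (hC : Ccnt σ = 0) {i j : Fin g} (hij : i < j) (hj : j < σ i)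
    (hσ : σ i < σ j) : False :=
  filter_eq_empty_iff.mp (card_eq_zero.mp hC) (mem_univ (i, j)) ⟨hij, hj, hσ⟩

/-- Were the exit point `w (b - 1)` of the excursion below the peak `w 0` not below its entry
point `w (1 - a)`, the orbit would rise past it between the times `1 - a` and `0`, by an arc
crossing the arc `w (b - 1) ↦ w b`. -/
lemma excursion_exit_lt_entry (hC : Ccnt σ = 0) {w : ℤ → Fin g}
    (hw : ∀ k, σ (w k) = w (k + 1)) (hw1 : w 1 < w 0) (hw1' : w (-1) < w 0) {a b : ℕ}
    (ha : w 0 < w (-a)) (hb : w 0 < w b) (hbelow : ∀ j : ℤ, -a < j → j < b → w j ≤ w 0) :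
    w (b - 1) < w (1 - a) := by
  have hshift : ∀ i j, w i = w j → w (i + 1) = w (j + 1) := fun i j h => by
    rw [← hw, ← hw, h]
  have hb1 : (1 : ℤ) < b := by
    rcases lt_trichotomy (b : ℤ) 1 with h | h | h
    · rw [show (b : ℤ) = 0 by omega] at hb
      exact absurd hb (lt_irrefl _)
    · rw [h] at hb
      exact absurd hb hw1.not_gt
    · exact h
  have ha1 : (1 : ℤ) < a := by
    rcases lt_trichotomy (a : ℤ) 1 with h | h | h
    · rw [show (a : ℤ) = 0 by omega] at ha
      exact absurd ha (lt_irrefl _)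
    · rw [h] at ha
      exact absurd ha hw1'.not_gt
    · exact h
  have hσu : σ (w (b - 1)) = w b := by rw [hw, sub_add_cancel]
  have hu : w (b - 1) < w 0 := by
    refine lt_of_le_of_ne (hbelow _ (by omega) (by omega)) fun h => ?_
    have := hshift _ _ h
    rw [sub_add_cancel, zero_add] at this
    exact hw1.not_gt (this ▸ hb)
  have hup : w (b - 1) < w (-1) := by
    rcases lt_trichotomy (w (-1)) (w (b - 1)) with h | h | h
    · exact (false_of_Ccnt_eq_zero σ hC h (by rwa [hw, neg_add_cancel]) (by
        rwa [hw, neg_add_cancel, hσu])).elim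
    · have := hshift _ _ h
      rw [sub_add_cancel, neg_add_cancel] at this
      exact absurd (this ▸ hb) (lt_irrefl _)
    · exact h
  by_contra! hge
  rcases hge.lt_or_eq with hlt | heq
  · obtain ⟨k, hk1, hk2, hwk, hwk1⟩ :=
      Int.exists_lt_le_add_one (by omega : 1 - (a : ℤ) ≤ -1) hlt hup.le
    have hne : w (b - 1) ≠ w (k + 1) := fun h => by
      have := hshift _ _ h
      rw [sub_add_cancel] at this
      exact (hbelow (k + 1 + 1) (by omega) (by omega)).not_gt (this ▸ hb)
    refine false_of_Ccnt_eq_zero σ hC hwk (by rw [hw]; exact lt_of_le_of_ne hwk1 hne) ?_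
    rw [hw, hσu]
    exact (hbelow (k + 1) (by omega) (by omega)).trans_lt hb
  · have := hshift _ _ heq
    rw [sub_add_cancel] at this
    exact (hbelow (1 - a + 1) (by omega) (by omega)).not_gt (this ▸ hb)

lemma le_of_mem_peaks_of_sameCycle (hC : Ccnt σ = 0) (hC' : Ccnt σ⁻¹ = 0) {x y : Fin g}
    (hx : x ∈ peaks σ) (hxy : σ.SameCycle x y) : y ≤ x := by
  by_contra! hlt
  obtain ⟨hσx, hσx'⟩ : σ x < x ∧ σ⁻¹ x < x := by simpa [peaks] using hx
  set w : ℤ → Fin g := fun k => (σ ^ k) x with hwdef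
  have hw : ∀ k, σ (w k) = w (k + 1) := fun k => by
    simp only [hwdef]
    rw [add_comm, zpow_one_add, Perm.mul_apply]
  have hfwd : ∃ n : ℕ, w 0 < w n := by
    obtain ⟨n, hn⟩ := hxy.exists_nat_pow_eq
    refine ⟨n, ?_⟩
    simp only [hwdef]
    rwa [zpow_natCast, hn, zpow_zero]
  have hbwd : ∃ n : ℕ, w 0 < w (-n) := by
    obtain ⟨n, hn⟩ := (Perm.sameCycle_inv.mpr hxy).exists_nat_pow_eq
    refine ⟨n, ?_⟩
    simp only [hwdef]
    rwa [zpow_neg, zpow_natCast, ← inv_pow, hn, zpow_zero]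
  have hbelow : ∀ j : ℤ, -(Nat.find hbwd : ℤ) < j → j < Nat.find hfwd → w j ≤ w 0 := by
    intro j hj hj'
    rcases le_or_gt 0 j with h | h
    · lift j to ℕ using h
      exact not_lt.mp (Nat.find_min hfwd (by omega))
    · obtain ⟨i, rfl⟩ : ∃ i : ℕ, j = -i := ⟨j.natAbs, by omega⟩
      exact not_lt.mp (Nat.find_min hbwd (by omega))
  have hexit := excursion_exit_lt_entry σ hC hw (by simpa [hwdef]) (by simpa [hwdef])
    (Nat.find_spec hbwd) (Nat.find_spec hfwd) hbelow
  -- along the orbit of `σ⁻¹` entry and exit swap roles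
  have hentry := excursion_exit_lt_entry σ⁻¹ hC' (w := fun k => w (-k))
    (fun k => Perm.inv_eq_iff_eq.mpr (by rw [hw]; ring_nf)) (by simpa [hwdef])
    (by simpa [hwdef]) (by simpa using Nat.find_spec hfwd) (Nat.find_spec hbwd)
    (fun j hj hj' => hbelow (-j) (by omega) (by omega))
  rw [neg_sub, neg_sub] at hentry
  exact lt_asymm hexit hentry

lemma max'_support_mem_peaks {c : Perm (Fin g)} (hc : c ∈ σ.cycleFactorsFinset)
    (hne : c.support.Nonempty) : c.support.max' hne ∈ peaks σ := by
  set M := c.support.max' hne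
  have hM : M ∈ σ.support := Perm.mem_cycleFactorsFinset_support_le hc (max'_mem _ _)
  have hcM : c = σ.cycleOf M := Perm.cycle_is_cycleOf (max'_mem _ _) hc
  have hσM : σ M ≠ M := Perm.mem_support.mp hM
  have hlt : ∀ y, σ.SameCycle M y → y ≠ M → y < M := fun y hy hyM =>
    lt_of_le_of_ne (le_max' _ _ (by rw [hcM, Perm.mem_support_cycleOf_iff' hσM]; exact hy)) hyM
  simp only [peaks, mem_filter, mem_univ, true_and]
  exact ⟨hlt _ (Perm.sameCycle_apply_right.mpr (Perm.SameCycle.refl _ _)) hσM,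
    hlt _ (by simp [Perm.inv_def, Perm.SameCycle.refl])
      (by rwa [Ne, Perm.inv_eq_iff_eq, eq_comm])⟩

lemma card_peaks_eq_card_cycleType (hC : Ccnt σ = 0) (hC' : Ccnt σ⁻¹ = 0) :
    #(peaks σ) = Multiset.card σ.cycleType := by
  have hsupp : ∀ t ∈ peaks σ, t ∈ σ.support := fun t ht =>
    Perm.mem_support.mpr (ne_of_lt (mem_filter.mp ht).2.1)
  rw [Perm.cycleType_def, Multiset.card_map, ← card_def]
  refine card_bij (fun t _ => σ.cycleOf t)
    (fun t ht => Perm.cycleOf_mem_cycleFactorsFinset_iff.mpr (hsupp t ht)) ?_ ?_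
  · intro s hs t ht hst
    have hst' := (Perm.sameCycle_iff_cycleOf_eq_of_mem_support (hsupp s hs) (hsupp t ht)).mpr hst
    exact le_antisymm (le_of_mem_peaks_of_sameCycle σ hC hC' ht hst'.symm)
      (le_of_mem_peaks_of_sameCycle σ hC hC' hs hst')
  · intro c hc
    have hne : c.support.Nonempty := nonempty_iff_ne_empty.mpr
      (Perm.support_eq_empty_iff.not.mpr (Perm.mem_cycleFactorsFinset_iff.mp hc).1.ne_one)
    exact ⟨_, max'_support_mem_peaks σ hc hne, (Perm.cycle_is_cycleOf (max'_mem _ _) hc).symm⟩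

end Arcs

/-- `2ℓ(σ) = 4(A_σ + A_{σ⁻¹} + B_σ) + #{i : σ(i) ≠ i} + 1`
iff `C_σ = C_{σ⁻¹} = 0` and `σ` is a disjoint product of transpositions and
exactly one 3-cycle. -/
theorem eq_plus_one_iff (g : ℕ) (σ : Equiv.Perm (Fin g)) :
    2 * invCnt σ = 4 * (Acnt σ + Acnt σ⁻¹ + Bcnt σ)
        + (Finset.univ.filter (fun i : Fin g => σ i ≠ i)).card + 1
      ↔ (Ccnt σ = 0 ∧ Ccnt σ⁻¹ = 0 ∧
         ∃ k : ℕ, σ.cycleType = 3 ::ₘ Multiset.replicate k 2) := by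
  have hinv := invCnt_eq σ
  have hsupp := card_support_eq σ
  have hle := card_peaks_le σ
  have hsum := σ.sum_cycleType
  change _ = _ + #σ.support + 1 ↔ _
  constructor
  · intro h
    have hC : Ccnt σ = 0 := by omega
    have hC' : Ccnt σ⁻¹ = 0 := by omega
    have hcard := card_peaks_eq_card_cycleType σ hC hC'
    exact ⟨hC, hC', Multiset.exists_eq_cons_replicate_of_sum_eq
      (fun a ha => Perm.two_le_of_mem_cycleType ha) (by omega)⟩
  · rintro ⟨hC, hC', k, hk⟩
    have hcard := card_peaks_eq_card_cycleType σ hC hC'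
    rw [hk] at hcard hsum
    simp only [Multiset.card_cons, Multiset.card_replicate, Multiset.sum_cons,
      Multiset.sum_replicate, smul_eq_mul] at hcard hsum
    omega
end
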